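/- arXiv:1303.5001 — 6 statements merged into one kernel-verified Lean document; each statement's English description precedes it below -/
import Mathlib

section
/- Let 0 < θ < ε ≤ 1 and let n be a positive integer with n ≥ (ε² − θ²)⁻¹. If A₁,…,Aₙ are measurable events in a probability space (Ω,Σ,μ) with μ(Aᵢ) ≥ ε for every i, then there exist indices i ≠ j such that μ(Aᵢ ∩ Aⱼ) ≥ θ². -/
open MeasureTheory ProbabilityTheory Finset

/-!
Let `X = ∑ᵢ 1_{Aᵢ}`. Then `E X = ∑ᵢ μ(Aᵢ) ≥ nε` and `E X² = ∑ᵢ ∑ⱼ μ(Aᵢ ∩ Aⱼ)`. If every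
off-diagonal term were below `θ²`, the diagonal terms being at most `1`, the inequality
`(E X)² ≤ E X²` would give `n²ε² ≤ n + n(n - 1)θ² < n + n²θ²`, i.e. `n(ε² - θ²) < 1`.
-/

namespace MeasureTheory

variable {Ω ι : Type*} [Fintype ι] {A : ι → Set Ω}

lemma sq_sum_indicator_one (ω : Ω) :
    (∑ i, (A i).indicator (1 : Ω → ℝ) ω) ^ 2 = ∑ i, ∑ j, (A i ∩ A j).indicator 1 ω := by
  simp only [sq, sum_mul_sum, Set.inter_indicator_one, Pi.mul_apply]

variable [MeasurableSpace Ω] {μ : Measure Ω}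

lemma sq_integral_le_integral_sq [IsProbabilityMeasure μ] {X : Ω → ℝ} (hX : MemLp X 2 μ) :
    (∫ ω, X ω ∂μ) ^ 2 ≤ ∫ ω, X ω ^ 2 ∂μ := by
  have h := variance_nonneg X μ
  rw [variance_eq_sub hX] at h
  simpa [Pi.pow_apply, sub_nonneg] using h

lemma integral_sum_indicator_one [IsFiniteMeasure μ] (hA : ∀ i, MeasurableSet (A i)) :
    ∫ ω, ∑ i, (A i).indicator 1 ω ∂μ = ∑ i, μ.real (A i) := by
  rw [integral_finsetSum _ fun i _ => (integrable_const 1).indicator (hA i)]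
  simp only [integral_indicator_one (hA _)]

lemma integral_sq_sum_indicator_one [IsFiniteMeasure μ] (hA : ∀ i, MeasurableSet (A i)) :
    ∫ ω, (∑ i, (A i).indicator 1 ω) ^ 2 ∂μ = ∑ i, ∑ j, μ.real (A i ∩ A j) := by
  simp_rw [sq_sum_indicator_one, ← Finset.sum_product']
  rw [integral_finsetSum _ fun p _ => (integrable_const 1).indicator ((hA p.1).inter (hA p.2))]
  simp only [integral_indicator_one ((hA _).inter (hA _))]

lemma sq_sum_measureReal_le_sum_sum_measureReal_inter [IsProbabilityMeasure μ]
    (hA : ∀ i, MeasurableSet (A i)) :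
    (∑ i, μ.real (A i)) ^ 2 ≤ ∑ i, ∑ j, μ.real (A i ∩ A j) := by
  rw [← integral_sum_indicator_one hA, ← integral_sq_sum_indicator_one hA]
  exact sq_integral_le_integral_sq <|
    memLp_finsetSum _ fun i _ => (memLp_const (1 : ℝ)).indicator (hA i)

lemma sum_sum_measureReal_inter_le [IsProbabilityMeasure μ] {c : ℝ}
    (hc : ∀ i j, i ≠ j → μ.real (A i ∩ A j) ≤ c) :
    ∑ i, ∑ j, μ.real (A i ∩ A j) ≤ Fintype.card ι + Fintype.card ι * (Fintype.card ι - 1) * c := by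
  classical
  have hterm : ∀ i j, μ.real (A i ∩ A j) ≤ c + if i = j then 1 - c else 0 := fun i j => by
    split_ifs with hij
    · linarith [measureReal_le_one (μ := μ) (s := A i ∩ A j)]
    · linarith [hc i j hij]
  calc ∑ i, ∑ j, μ.real (A i ∩ A j) ≤ ∑ i : ι, ∑ j : ι, (c + if i = j then 1 - c else 0) :=
        sum_le_sum fun i _ => sum_le_sum fun j _ => hterm i j
    _ = _ := by
        simp only [sum_add_distrib, sum_const, card_univ, nsmul_eq_mul, sum_ite_eq, mem_univ,
          ↓reduceIte]
        ring

lemma sq_card_mul_le_of_measureReal_inter_le [IsProbabilityMeasure μ]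
    (hA : ∀ i, MeasurableSet (A i)) {ε c : ℝ} (hε₀ : 0 ≤ ε) (hε : ∀ i, ε ≤ μ.real (A i))
    (hc : ∀ i j, i ≠ j → μ.real (A i ∩ A j) ≤ c) :
    (Fintype.card ι * ε) ^ 2 ≤ Fintype.card ι + Fintype.card ι * (Fintype.card ι - 1) * c := by
  have hsum : Fintype.card ι * ε ≤ ∑ i, μ.real (A i) := by
    simpa using sum_le_sum fun i (_ : i ∈ univ) => hε i
  calc (Fintype.card ι * ε) ^ 2 ≤ (∑ i, μ.real (A i)) ^ 2 := by gcongr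
    _ ≤ ∑ i, ∑ j, μ.real (A i ∩ A j) := sq_sum_measureReal_le_sum_sum_measureReal_inter hA
    _ ≤ _ := sum_sum_measureReal_inter_le hc

end MeasureTheory

theorem stmt_0_general {Ω : Type*} [MeasurableSpace Ω] (μ : Measure Ω) [IsProbabilityMeasure μ]
    (θ ε : ℝ) (hθ : 0 < θ) (hθε : θ < ε)
    (n : ℕ) (hn' : (ε ^ 2 - θ ^ 2)⁻¹ ≤ (n : ℝ))
    (A : Fin n → Set Ω) (hmeas : ∀ i, MeasurableSet (A i))
    (hA : ∀ i, ε ≤ (μ (A i)).toReal) :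
    ∃ i j : Fin n, i ≠ j ∧ θ ^ 2 ≤ (μ (A i ∩ A j)).toReal := by
  by_contra! hsmall
  have hgap : 0 < ε ^ 2 - θ ^ 2 := by nlinarith
  have hn : 1 ≤ n * (ε ^ 2 - θ ^ 2) := (inv_le_iff_one_le_mul₀ hgap).mp hn'
  have key := sq_card_mul_le_of_measureReal_inter_le hmeas (by linarith) hA
    fun i j hij => (hsmall i j hij).le
  rw [Fintype.card_fin] at key
  nlinarith [mul_le_mul_of_nonneg_left hn (Nat.cast_nonneg n), sq_nonneg θ]

/-- If `0 < θ < ε ≤ 1`, `n ≥ (ε² − θ²)⁻¹` is a positive integer and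
`A₁,…,Aₙ` are measurable events in a probability space with `μ(Aᵢ) ≥ ε` for every `i`,
then there are `i ≠ j` with `μ(Aᵢ ∩ Aⱼ) ≥ θ²`. -/
theorem stmt_0 {Ω : Type*} [MeasurableSpace Ω] (μ : Measure Ω) [IsProbabilityMeasure μ]
    (θ ε : ℝ) (hθ : 0 < θ) (hθε : θ < ε) (hε : ε ≤ 1)
    (n : ℕ) (hn : 1 ≤ n) (hn' : (ε ^ 2 - θ ^ 2)⁻¹ ≤ (n : ℝ))
    (A : Fin n → Set Ω) (hmeas : ∀ i, MeasurableSet (A i))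
    (hA : ∀ i, ε ≤ (μ (A i)).toReal) :
    ∃ i j : Fin n, i ≠ j ∧ θ ^ 2 ≤ (μ (A i ∩ A j)).toReal :=
  stmt_0_general μ θ ε hθ hθε n hn' A hmeas hA
end

section
/- Let k ≥ 2, let 𝓛 be a finite alphabet disjoint from [k], and let 𝐰 = (w, w₀,…,w_{n−1}) be an n-dimensional Carlson–Simpson sequence over k. For every type τ ∈ 𝒯(𝓛) of length m ≤ n, the set 𝐰(k,𝓛,τ) of elements of 𝐰(k,𝓛) of type τ equals {𝐳(τ) : 𝐳 ∈ Subseq_m(𝐰)}, the set of images of τ under all m-dimensional Carlson–Simpson subsequences of 𝐰. -/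
/-- Substitution of the letter `a ∈ [k]` for the variable (encoded as `none`)
in a variable word over `[k]`. -/
def subst (k : ℕ) (vw : List (Option (Fin k))) (a : Fin k) : List (Fin k) :=
  vw.map fun l => l.getD a

/-- A left variable word over `[k]`: its leftmost letter is the variable. -/
def IsLeftVar (k : ℕ) (vw : List (Option (Fin k))) : Prop := ∃ t, vw = none :: t

/-- `w⌢w₀(a₀)⌢…⌢w_{n−1}(a_{n−1})` for a Carlson–Simpson sequence `(w, ws)` and a word
of choices `as = (a₀,…,a_{n−1})` (with `n = as.length`). -/
def csApply (k : ℕ) (w : List (Fin k)) (ws : List (List (Option (Fin k))))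
    (as : List (Fin k)) : List (Fin k) :=
  w ++ (List.zipWith (subst k) ws as).flatten

/-- The Carlson–Simpson tree generated by the Carlson–Simpson sequence `(w, ws)`. -/
def genTree (k : ℕ) (w : List (Fin k)) (ws : List (List (Option (Fin k)))) :
    Set (List (Fin k)) :=
  {u | ∃ as : List (Fin k), as.length ≤ ws.length ∧ u = csApply k w ws as}

/-- Substitution of a letter `b ∈ [k] ∪ 𝓛` for the variable in a variable word over `[k]`,
yielding a word over `[k] ∪ 𝓛` (letters of `[k]` are `Sum.inl`, letters of `𝓛` are `Sum.inr`). -/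
def substG (k : ℕ) {L : Type*} (vw : List (Option (Fin k))) (b : Fin k ⊕ L) :
    List (Fin k ⊕ L) :=
  vw.map fun l => match l with | some a => Sum.inl a | none => b

/-- `𝐰(v) = w⌢w₀(a₀)⌢…⌢w_{m−1}(a_{m−1})` for `v = (a₀,…,a_{m−1})` a word over `[k] ∪ 𝓛`. -/
def applyG (k : ℕ) {L : Type*} (w : List (Fin k)) (ws : List (List (Option (Fin k))))
    (v : List (Fin k ⊕ L)) : List (Fin k ⊕ L) :=
  w.map Sum.inl ++ (List.zipWith (substG k) ws v).flatten

/-- The type of a word over `[k] ∪ 𝓛`: erase the letters of `[k]` and collapse runs of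
equal letters of `𝓛` to singletons. (Pure `[k]`-words get the empty list.) -/
def typeOf (k : ℕ) {L : Type*} [DecidableEq L] (u : List (Fin k ⊕ L)) : List L :=
  (u.filterMap Sum.getRight?).destutter (· ≠ ·)

/-- Substitution of `o ∈ [k] ∪ {x}` for the variable in a variable word over `[k]`. -/
def substO (k : ℕ) (vw : List (Option (Fin k))) (o : Option (Fin k)) :
    List (Option (Fin k)) :=
  vw.map fun l => match l with | none => o | some b => some b

/-- `(v, vs)` is a (`vs.length`-dimensional) Carlson–Simpson subsequence of `(w, ws)`:
there are letters `(aᵢ)` in `[k] ∪ {x}` and a strictly increasing sequence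
`n₀ < … < n_m ≤ dim 𝐰` with `a_{nᵢ} = x`, `a_j ∈ [k]` for `j < n₀`,
`v = w⌢w₀(a₀)⌢…⌢w_{n₀−1}(a_{n₀−1})` and
`vᵢ = w_{nᵢ}(a_{nᵢ})⌢…⌢w_{n_{i+1}−1}(a_{n_{i+1}−1})` (conditions (C1)–(C3)). -/
def IsCSSubseq (k : ℕ) (w : List (Fin k)) (ws : List (List (Option (Fin k))))
    (v : List (Fin k)) (vs : List (List (Option (Fin k)))) : Prop :=
  ∃ (a : ℕ → Option (Fin k)) (nf : ℕ → ℕ),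
    StrictMonoOn nf (Set.Iic vs.length) ∧
    nf vs.length ≤ ws.length ∧
    (∀ i < vs.length, a (nf i) = none) ∧
    (∀ j < nf 0, a j ≠ none) ∧
    v.map some = w.map some ++
      ((List.range (nf 0)).map fun j => substO k (ws.getD j []) (a j)).flatten ∧
    (∀ i < vs.length,
      vs.getD i [] =
        ((List.Ico (nf i) (nf (i + 1))).map fun j => substO k (ws.getD j []) (a j)).flatten)

/-!
Substituting a letter of `𝓛` into a variable word that contains the variable produces a nonempty
run of that letter, so the type of `𝐰(v)` is the type of `v`. A word `v` of type `τ` splits, at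
the positions where the type of its prefixes grows, into a prefix over `[k]` followed by blocks,
block `i` using only `τ[i]` and letters of `[k]`. Grouping the variable words `wⱼ` along these
blocks, with the `[k]`-letters of `v` substituted and its `𝓛`-letters turned back into the
variable, gives a Carlson–Simpson subsequence `𝐳` with `𝐳(τ) = 𝐰(v)`. Conversely, every `𝐳`
arises in this way from the word that carries `τ[i]` at the variable positions of block `i`; its
type is `τ` because consecutive letters of `τ` differ.
-/

namespace List

variable {α β γ : Type*}

theorem destutter'_append_singleton (R : α → α → Prop) [DecidableRel R] (l : List α)
    (a b : α) :
    (l ++ [b]).destutter' R a =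
      if ∀ x ∈ (l.destutter' R a).getLast?, R x b then l.destutter' R a ++ [b]
      else l.destutter' R a := by
  induction l generalizing a with
  | nil => simp [destutter'_singleton]
  | cons c l ih =>
    by_cases h : R a c
    · have hne : l.destutter' R c ≠ [] := destutter'_ne_nil l R
      rw [cons_append, destutter'_cons_pos _ h, destutter'_cons_pos _ h, ih,
        getLast?_cons_of_ne_nil hne]
      split_ifs <;> rfl
    · simp only [cons_append, destutter'_cons_neg _ h, ih]

theorem destutter_append_singleton (R : α → α → Prop) [DecidableRel R] (l : List α)
    (b : α) :
    (l ++ [b]).destutter R =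
      if ∀ x ∈ (l.destutter R).getLast?, R x b then l.destutter R ++ [b]
      else l.destutter R := by
  cases l with
  | nil => simp
  | cons c l => rw [cons_append, destutter_cons', destutter_cons', destutter'_append_singleton]

section

variable [DecidableEq α]

theorem destutter'_ne_append_of_forall_eq {t : α} {r : List α} (h : ∀ x ∈ r, x = t)
    (l : List α) : (r ++ l).destutter' (· ≠ ·) t = l.destutter' (· ≠ ·) t := by
  induction r with
  | nil => rfl
  | cons x r ih =>
    obtain rfl := h x mem_cons_self
    rw [cons_append, destutter'_cons_neg _ (not_not.2 rfl),
      ih fun y hy => h y (mem_cons_of_mem _ hy)]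

theorem destutter'_ne_flatten_of_forall₂ {l : List α} {rs : List (List α)}
    (h : Forall₂ (fun t r => r ≠ [] ∧ ∀ x ∈ r, x = t) l rs) (a : α) :
    rs.flatten.destutter' (· ≠ ·) a = l.destutter' (· ≠ ·) a := by
  induction h generalizing a with
  | nil => rfl
  | @cons t r l rs hr _ ih =>
    obtain ⟨x, r, rfl⟩ := exists_cons_of_ne_nil hr.1
    obtain rfl := hr.2 x mem_cons_self
    have hr' : ∀ y ∈ r, y = x := fun y hy => hr.2 y (mem_cons_of_mem _ hy)
    rw [flatten_cons, cons_append, destutter'_cons, destutter'_cons]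
    split_ifs with hax
    · rw [destutter'_ne_append_of_forall_eq hr', ih]
    · obtain rfl := not_not.1 hax
      rw [destutter'_ne_append_of_forall_eq hr', ih]

theorem destutter_ne_flatten_of_forall₂ {l : List α} {rs : List (List α)}
    (h : Forall₂ (fun t r => r ≠ [] ∧ ∀ x ∈ r, x = t) l rs) :
    rs.flatten.destutter (· ≠ ·) = l.destutter (· ≠ ·) := by
  cases h with
  | nil => rfl
  | @cons t r l rs hr h =>
    obtain ⟨x, r, rfl⟩ := exists_cons_of_ne_nil hr.1
    obtain rfl := hr.2 x mem_cons_self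
    rw [flatten_cons, cons_append, destutter_cons', destutter_cons',
      destutter'_ne_append_of_forall_eq (fun y hy => hr.2 y (mem_cons_of_mem _ hy)),
      destutter'_ne_flatten_of_forall₂ h]

end

theorem zipWith_eq_map_range (f : α → β → γ) (d : α) (d' : β) {l : List α} {l' : List β}
    (h : l'.length ≤ l.length) :
    zipWith f l l' = (range l'.length).map fun j => f (l.getD j d) (l'.getD j d') := by
  apply ext_getElem
  · simpa using h
  · intro j h₁ h₂
    simp only [length_zipWith] at h₁
    simp [getElem?_eq_getElem (lt_of_lt_of_le h₁ (min_le_left _ _)),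
      getElem?_eq_getElem (lt_of_lt_of_le h₁ (min_le_right _ _))]

theorem map_getD_range (l : List α) (d : α) : (range l.length).map (l.getD · d) = l := by
  apply ext_getElem <;> simp +contextual

theorem range_eq_append_flatten_Ico {nf : ℕ → ℕ} {m : ℕ} (hnf : MonotoneOn nf (Set.Iic m)) :
    range (nf m) = range (nf 0) ++ ((range m).map fun i => Ico (nf i) (nf (i + 1))).flatten := by
  induction m with
  | zero => simp
  | succ m ih =>
    rw [range_succ, map_append, flatten_append, ← append_assoc,
      ← ih (hnf.mono (Set.Iic_subset_Iic.2 m.le_succ)), map_singleton, flatten_singleton,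
      ← Ico.zero_bot, ← Ico.zero_bot, Ico.append_consecutive (Nat.zero_le _)
        (hnf (Set.mem_Iic.2 m.le_succ) (Set.mem_Iic.2 le_rfl) m.le_succ)]

theorem exists_map_some_eq {l : List (Option α)} (h : ∀ o ∈ l, o.isSome) :
    ∃ l' : List α, l'.map some = l :=
  ⟨l.reduceOption, by
    rw [reduceOption, map_filterMap_some_eq_filter_map_isSome, map_id, filter_eq_self.2 h]⟩

end List

section Substitution

variable {k : ℕ} {L : Type*}

theorem substG_eq_map_elim (vw : List (Option (Fin k))) (b : Fin k ⊕ L) :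
    substG k vw b = vw.map fun o => o.elim b Sum.inl := by
  unfold substG
  congr 1
  funext o
  cases o <;> rfl

theorem substG_substO (vw : List (Option (Fin k))) (o : Option (Fin k)) (b : Fin k ⊕ L) :
    substG k (substO k vw o) b = substG k vw (o.elim b Sum.inl) := by
  simp only [substG_eq_map_elim, substO, List.map_map]
  congr 1
  funext x
  cases x <;> cases o <;> rfl

theorem filterMap_getRight?_substG_inl (vw : List (Option (Fin k))) (c : Fin k) :
    (substG k vw (Sum.inl c : Fin k ⊕ L)).filterMap Sum.getRight? = [] := by
  simp only [substG_eq_map_elim, List.filterMap_map, List.filterMap_eq_nil_iff]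
  intro o _
  cases o <;> rfl

theorem filterMap_getRight?_substG_inr {vw : List (Option (Fin k))} (hvw : none ∈ vw) (t : L) :
    (substG k vw (Sum.inr t)).filterMap Sum.getRight? ≠ [] ∧
      ∀ x ∈ (substG k vw (Sum.inr t)).filterMap Sum.getRight?, x = t := by
  simp only [substG_eq_map_elim, List.filterMap_map]
  refine ⟨List.ne_nil_of_mem (List.mem_filterMap.2 ⟨none, hvw, rfl⟩), fun x hx => ?_⟩
  obtain ⟨o, -, ho⟩ := List.mem_filterMap.1 hx
  cases o <;> simp_all

theorem exists_forall₂_filterMap_getRight?_zipWith_substG :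
    ∀ {ws : List (List (Option (Fin k)))} {v : List (Fin k ⊕ L)}, v.length ≤ ws.length →
      (∀ vw ∈ ws, none ∈ vw) → ∃ rs : List (List L),
        (List.zipWith (substG k) ws v).flatten.filterMap Sum.getRight? = rs.flatten ∧
        List.Forall₂ (fun t r => r ≠ [] ∧ ∀ x ∈ r, x = t) (v.filterMap Sum.getRight?) rs
  | _, [], _, _ => ⟨[], by simp, .nil⟩
  | [], _ :: _, hv, _ => by simp at hv
  | vw :: ws, b :: v, hv, hws => by
    obtain ⟨rs, hrs, h⟩ := exists_forall₂_filterMap_getRight?_zipWith_substG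
      (Nat.le_of_succ_le_succ hv) fun vw' h' => hws vw' (List.mem_cons_of_mem _ h')
    simp only [List.zipWith_cons_cons, List.flatten_cons, List.filterMap_append, hrs]
    cases b with
    | inl c => exact ⟨rs, by rw [filterMap_getRight?_substG_inl, List.nil_append], h⟩
    | inr t =>
      exact ⟨_ :: rs, rfl,
        .cons (filterMap_getRight?_substG_inr (hws vw List.mem_cons_self) t) h⟩

variable [DecidableEq L] in
theorem typeOf_applyG {w : List (Fin k)} {ws : List (List (Option (Fin k)))}
    {v : List (Fin k ⊕ L)} (hv : v.length ≤ ws.length) (hws : ∀ vw ∈ ws, none ∈ vw) :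
    typeOf k (applyG k w ws v) = typeOf k v := by
  obtain ⟨rs, hrs, h⟩ := exists_forall₂_filterMap_getRight?_zipWith_substG hv hws
  have hw : (w.map Sum.inl : List (Fin k ⊕ L)).filterMap Sum.getRight? = [] := by simp
  rw [typeOf, applyG, List.filterMap_append, hw, List.nil_append, hrs,
    List.destutter_ne_flatten_of_forall₂ h, typeOf]

end Substitution

theorem Monotone.exists_jumps {f : ℕ → ℕ} (hf : Monotone f) (h0 : f 0 = 0)
    (hstep : ∀ j, f (j + 1) ≤ f j + 1) (N : ℕ) :
    ∃ nf : ℕ → ℕ, StrictMonoOn nf (Set.Iic (f N)) ∧ nf (f N) = N ∧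
      (∀ i < f N, f (nf i) = i) ∧ (∀ j < nf 0, f (j + 1) = 0) ∧
      ∀ i < f N, ∀ j, nf i ≤ j → j < nf (i + 1) → f (j + 1) = i + 1 := by
  set nf : ℕ → ℕ := fun i => Nat.findGreatest (fun j => f j ≤ i) N
  have hle (i : ℕ) : f (nf i) ≤ i :=
    Nat.findGreatest_spec (P := fun j => f j ≤ i) (Nat.zero_le N) (by simp only [h0]; omega)
  have hjump (i : ℕ) (hi : i < f N) : nf i < N ∧ f (nf i) = i ∧ f (nf i + 1) = i + 1 := by
    have hlt : nf i < N :=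
      lt_of_le_of_ne (Nat.findGreatest_le N) fun h => (h ▸ hle i).not_gt hi
    have : ¬f (nf i + 1) ≤ i :=
      Nat.findGreatest_is_greatest (P := fun j => f j ≤ i) (Nat.lt_succ_self _) hlt
    have := hle i
    have := hstep (nf i)
    exact ⟨hlt, by omega, by omega⟩
  refine ⟨nf, ?_, Nat.findGreatest_eq le_rfl, fun i hi => (hjump i hi).2.1, ?_, ?_⟩
  · intro i hi i' hi' hii'
    have hi : i < f N := lt_of_lt_of_le hii' hi'
    exact Nat.le_findGreatest (hjump i hi).1 (by rw [(hjump i hi).2.2]; omega)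
  · intro j hj
    have := hf (show j + 1 ≤ nf 0 by omega)
    have := hle 0
    omega
  · intro i hi j hj₁ hj₂
    have := hf (show nf i + 1 ≤ j + 1 by omega)
    have := hf (show j + 1 ≤ nf (i + 1) by omega)
    have := hle (i + 1)
    have := (hjump i hi).2.2
    omega

section PrefixTypes

variable {k : ℕ} {L : Type*} [DecidableEq L]

theorem typeOf_append_inl (u : List (Fin k ⊕ L)) (c : Fin k) :
    typeOf k (u ++ [Sum.inl c]) = typeOf k u := by
  simp [typeOf, List.filterMap_cons]

theorem typeOf_append_inr (u : List (Fin k ⊕ L)) (t : L) :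
    typeOf k (u ++ [Sum.inr t]) =
      if (typeOf k u).getLast? = some t then typeOf k u else typeOf k u ++ [t] := by
  have h := List.destutter_append_singleton (· ≠ ·) (u.filterMap Sum.getRight?) t
  rw [typeOf, List.filterMap_append]
  by_cases ht : (typeOf k u).getLast? = some t <;> simp_all [typeOf]

theorem typeOf_take_succ (v : List (Fin k ⊕ L)) (j : ℕ) :
    typeOf k (v.take j) <+: typeOf k (v.take (j + 1)) ∧
      (typeOf k (v.take (j + 1))).length ≤ (typeOf k (v.take j)).length + 1 := by
  rw [List.take_add_one]
  rcases v[j]? with _ | _ | t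
  · simp
  · simp [typeOf_append_inl]
  · rw [Option.toList_some, typeOf_append_inr]
    split_ifs
    · simp
    · simp [List.prefix_append]

theorem typeOf_take_succ_of_inl {v : List (Fin k ⊕ L)} {j : ℕ} {c : Fin k}
    (h : v[j]? = some (Sum.inl c)) : typeOf k (v.take (j + 1)) = typeOf k (v.take j) := by
  rw [List.take_add_one, h, Option.toList_some, typeOf_append_inl]

theorem getLast?_typeOf_take_succ_of_inr {v : List (Fin k ⊕ L)} {j : ℕ} {t : L}
    (h : v[j]? = some (Sum.inr t)) : (typeOf k (v.take (j + 1))).getLast? = some t := by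
  rw [List.take_add_one, h, Option.toList_some, typeOf_append_inr]
  split_ifs with ht
  · exact ht
  · exact List.getLast?_concat

theorem typeOf_take_prefix_typeOf_take (v : List (Fin k ⊕ L)) {j j' : ℕ} (h : j ≤ j') :
    typeOf k (v.take j) <+: typeOf k (v.take j') := by
  induction j', h using Nat.le_induction with
  | base => exact List.prefix_rfl
  | succ j' _ ih => exact ih.trans (typeOf_take_succ v j').1

theorem typeOf_take_prefix_typeOf (v : List (Fin k ⊕ L)) (j : ℕ) :
    typeOf k (v.take j) <+: typeOf k v := by
  simpa [List.take_of_length_le (le_max_right j v.length)]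
    using typeOf_take_prefix_typeOf_take v (le_max_left j v.length)

theorem getElem?_typeOf_of_inr {v : List (Fin k ⊕ L)} {j i : ℕ} {t : L}
    (hj : v[j]? = some (Sum.inr t)) (hlen : (typeOf k (v.take (j + 1))).length = i + 1) :
    (typeOf k v)[i]? = some t := by
  obtain ⟨s, hs⟩ := typeOf_take_prefix_typeOf v (j + 1)
  have hlast := getLast?_typeOf_take_succ_of_inr (k := k) hj
  rw [List.getLast?_eq_getElem?, hlen, Nat.add_sub_cancel] at hlast
  rw [← hs, List.getElem?_append_left (by omega), hlast]

end PrefixTypes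

section TypeBlocks

variable {k : ℕ} {L : Type*}

/-- The positions `nf 0 < ⋯ < nf m` cut the word `(range (nf m)).map c` into a prefix over `[k]`
followed by `m` blocks, block `i` starting with `τ[i]` and containing no other letter of `𝓛`. -/
def IsTypeBlocks (c : ℕ → Fin k ⊕ L) (τ : List L) (nf : ℕ → ℕ) : Prop :=
  StrictMonoOn nf (Set.Iic τ.length) ∧ (∀ j < nf 0, (c j).isLeft) ∧
    ∀ i (hi : i < τ.length), c (nf i) = Sum.inr τ[i] ∧
      ∀ j, nf i ≤ j → j < nf (i + 1) → ∀ t, c j = Sum.inr t → t = τ[i]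

variable [DecidableEq L]

theorem exists_isTypeBlocks_typeOf (v : List (Fin k ⊕ L)) (d : Fin k ⊕ L) :
    ∃ nf, nf (typeOf k v).length = v.length ∧ IsTypeBlocks (v.getD · d) (typeOf k v) nf := by
  -- blocks start where the number of runs of `𝓛`-letters in the prefixes of `v` goes up
  set ℓ : ℕ → ℕ := fun j => (typeOf k (v.take j)).length
  obtain ⟨nf, hsm, hN, hstart, hhead, hblock⟩ :=
    Monotone.exists_jumps (f := ℓ) (fun _ _ h => (typeOf_take_prefix_typeOf_take v h).length_le)
      rfl (fun j => (typeOf_take_succ v j).2) v.length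
  have hℓN : ℓ v.length = (typeOf k v).length := by simp [ℓ]
  rw [hℓN] at hsm hN hstart hblock
  have hnf_le (i : ℕ) (hi : i ≤ (typeOf k v).length) : nf i ≤ v.length :=
    hN ▸ hsm.monotoneOn hi (Set.mem_Iic.2 le_rfl) hi
  refine ⟨nf, hN, hsm, fun j hj => ?_, fun i hi => ⟨?_, fun j hj₁ hj₂ t ht => ?_⟩⟩
  · have hjv : j < v.length := lt_of_lt_of_le hj (hnf_le 0 (Nat.zero_le _))
    dsimp only
    rw [show v.getD j d = v[j] from List.getD_eq_getElem _ _ hjv]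
    rcases hv : v[j] with c | t
    · rfl
    · have hlast := getLast?_typeOf_take_succ_of_inr (k := k)
        (show v[j]? = some (Sum.inr t) by rw [List.getElem?_eq_getElem hjv, hv])
      rw [List.eq_nil_of_length_eq_zero (hhead j hj)] at hlast
      simp at hlast
  · have hlt : nf i < nf (i + 1) :=
      hsm (Set.mem_Iic.2 hi.le) (Set.mem_Iic.2 hi) (Nat.lt_succ_self i)
    have hiv : nf i < v.length := lt_of_lt_of_le hlt (hnf_le (i + 1) hi)
    have hℓ := hblock i hi (nf i) le_rfl hlt
    dsimp only
    rw [show v.getD (nf i) d = v[nf i] from List.getD_eq_getElem _ _ hiv]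
    rcases hv : v[nf i] with c | t
    · have hsame := typeOf_take_succ_of_inl (k := k)
        (show v[nf i]? = some (Sum.inl c) by rw [List.getElem?_eq_getElem hiv, hv])
      have := hstart i hi
      simp only [ℓ, hsame] at hℓ this
      omega
    · have := getElem?_typeOf_of_inr (by rw [List.getElem?_eq_getElem hiv, hv]) hℓ
      rw [List.getElem?_eq_getElem hi, Option.some_inj] at this
      rw [this]
  · have hjv : j < v.length := lt_of_lt_of_le hj₂ (hnf_le (i + 1) hi)
    dsimp only at ht
    rw [show v.getD j d = v[j] from List.getD_eq_getElem _ _ hjv] at ht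
    have := getElem?_typeOf_of_inr (by rw [List.getElem?_eq_getElem hjv, ht])
      (hblock i hi j hj₁ hj₂)
    rw [List.getElem?_eq_getElem hi, Option.some_inj] at this
    exact this.symm

theorem typeOf_range_map_of_isTypeBlocks {c : ℕ → Fin k ⊕ L} {τ : List L} {nf : ℕ → ℕ}
    (hτ : τ.IsChain (· ≠ ·)) (h : IsTypeBlocks c τ nf) :
    typeOf k ((List.range (nf τ.length)).map c) = τ := by
  obtain ⟨hsm, hhead, hblocks⟩ := h
  have hhead' : (List.range (nf 0)).filterMap (Sum.getRight? ∘ c) = [] := by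
    refine List.filterMap_eq_nil_iff.2 fun j hj => ?_
    obtain ⟨x, hx⟩ := Sum.isLeft_iff.1 (hhead j (List.mem_range.1 hj))
    simp [hx]
  rw [typeOf, List.filterMap_map, List.range_eq_append_flatten_Ico hsm.monotoneOn,
    List.filterMap_append, List.filterMap_flatten, List.map_map, hhead', List.nil_append,
    List.destutter_ne_flatten_of_forall₂, List.destutter_of_isChain _ _ hτ]
  refine List.forall₂_iff_get.2 ⟨by simp, fun i h₁ h₂ => ?_⟩
  obtain ⟨hstart, hblock⟩ := hblocks i h₁
  simp only [List.get_eq_getElem, List.getElem_map, List.getElem_range, Function.comp_apply]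
  refine ⟨List.ne_nil_of_mem (a := τ[i]) (List.mem_filterMap.2 ⟨nf i, ?_, by simp [hstart]⟩),
    fun x hx => ?_⟩
  · exact List.Ico.mem.2
      ⟨le_rfl, hsm (Set.mem_Iic.2 h₁.le) (Set.mem_Iic.2 h₁) (Nat.lt_succ_self i)⟩
  · obtain ⟨j, hj, hx⟩ := List.mem_filterMap.1 hx
    obtain ⟨hj₁, hj₂⟩ := List.Ico.mem.1 hj
    exact hblock j hj₁ hj₂ x (Sum.getRight?_eq_some_iff.1 hx)

end TypeBlocks

section Composition

variable {k : ℕ} {L : Type*}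

theorem substG_flatten (vws : List (List (Option (Fin k)))) (b : Fin k ⊕ L) :
    substG k vws.flatten b = (vws.map (substG k · b)).flatten := by
  simp only [substG, List.map_flatten]

theorem map_inl_eq_of_map_some_eq {w z : List (Fin k)} {ws : List (List (Option (Fin k)))}
    {a : ℕ → Option (Fin k)} {n : ℕ}
    (hz : z.map some = w.map some ++
      ((List.range n).map fun j => substO k (ws.getD j []) (a j)).flatten) (b : Fin k ⊕ L) :
    z.map Sum.inl = w.map Sum.inl ++
      ((List.range n).map fun j => substG k (ws.getD j []) ((a j).elim b Sum.inl)).flatten := by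
  have := congrArg (List.map fun o => o.elim b Sum.inl) hz
  simpa [List.map_flatten, Function.comp_def, ← substG_eq_map_elim, substG_substO] using this

theorem applyG_eq_applyG_range_map {w z : List (Fin k)} {ws zs : List (List (Option (Fin k)))}
    {a : ℕ → Option (Fin k)} {nf : ℕ → ℕ} (hnf : MonotoneOn nf (Set.Iic zs.length))
    (hN : nf zs.length ≤ ws.length)
    (hz : z.map some = w.map some ++
      ((List.range (nf 0)).map fun j => substO k (ws.getD j []) (a j)).flatten)
    (hzs : ∀ i < zs.length, zs.getD i [] =
      ((List.Ico (nf i) (nf (i + 1))).map fun j => substO k (ws.getD j []) (a j)).flatten)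
    {u : List (Fin k ⊕ L)} (hu : u.length = zs.length) (d : Fin k ⊕ L) {c : ℕ → Fin k ⊕ L}
    (hhead : ∀ j < nf 0, c j = (a j).elim d Sum.inl)
    (hblock : ∀ i < zs.length, ∀ j, nf i ≤ j → j < nf (i + 1) →
      c j = (a j).elim (u.getD i d) Sum.inl) :
    applyG k z zs u = applyG k w ws ((List.range (nf zs.length)).map c) := by
  set g : ℕ → List (Fin k ⊕ L) := fun j => substG k (ws.getD j []) (c j)
  have hz' : z.map Sum.inl = w.map Sum.inl ++ ((List.range (nf 0)).map g).flatten := by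
    rw [map_inl_eq_of_map_some_eq hz d]
    congr 2
    exact List.map_congr_left fun j hj => by simp only [g, hhead j (List.mem_range.1 hj)]
  have hzs' : ∀ i ∈ List.range zs.length, substG k (zs.getD i []) (u.getD i d) =
      ((List.Ico (nf i) (nf (i + 1))).map g).flatten := by
    intro i hi
    rw [hzs i (List.mem_range.1 hi), substG_flatten, List.map_map]
    congr 1
    refine List.map_congr_left fun j hj => ?_
    obtain ⟨hj₁, hj₂⟩ := List.Ico.mem.1 hj
    simp only [Function.comp_apply, substG_substO, g, hblock i (List.mem_range.1 hi) j hj₁ hj₂]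
  have hv : List.zipWith (substG k) ws ((List.range (nf zs.length)).map c) =
      (List.range (nf zs.length)).map g := by
    rw [List.zipWith_eq_map_range (substG k) [] d (by simpa using hN)]
    simp only [List.length_map, List.length_range]
    refine List.map_congr_left fun j hj => ?_
    have hj := List.mem_range.1 hj
    simp [g, List.getElem?_range hj, List.getElem?_eq_getElem (hj.trans_le hN)]
  rw [applyG, applyG, List.zipWith_eq_map_range (substG k) [] d hu.le, hu,
    List.map_congr_left hzs', hz', hv, List.append_assoc, List.range_eq_append_flatten_Ico hnf,
    List.map_append, List.flatten_append, List.map_flatten, List.flatten_flatten, List.map_map,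
    List.map_map]
  rfl

end Composition

section CarlsonSimpson

variable {k : ℕ} {L : Type*} [DecidableEq L]

theorem exists_subseq_words (w : List (Fin k)) (ws : List (List (Option (Fin k))))
    {a : ℕ → Option (Fin k)} (nf : ℕ → ℕ) (m : ℕ) (ha : ∀ j < nf 0, a j ≠ none) :
    ∃ (z : List (Fin k)) (zs : List (List (Option (Fin k)))), zs.length = m ∧
      z.map some = w.map some ++
        ((List.range (nf 0)).map fun j => substO k (ws.getD j []) (a j)).flatten ∧
      ∀ i < zs.length, zs.getD i [] =
        ((List.Ico (nf i) (nf (i + 1))).map fun j => substO k (ws.getD j []) (a j)).flatten := by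
  obtain ⟨z, hz⟩ := List.exists_map_some_eq (l := w.map some ++
      ((List.range (nf 0)).map fun j => substO k (ws.getD j []) (a j)).flatten) fun o ho => by
    simp only [List.mem_append, List.mem_map, List.mem_flatten, List.mem_range] at ho
    rcases ho with ⟨x, -, rfl⟩ | ⟨_, ⟨j, hj, rfl⟩, ho⟩
    · rfl
    · obtain ⟨x, hx⟩ := Option.ne_none_iff_exists'.1 (ha j hj)
      simp only [substO, hx, List.mem_map] at ho
      obtain ⟨o', -, rfl⟩ := ho
      cases o' <;> rfl
  refine ⟨z, (List.range m).map fun i =>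
    ((List.Ico (nf i) (nf (i + 1))).map fun j => substO k (ws.getD j []) (a j)).flatten,
    by simp, hz, fun i hi => ?_⟩
  simp only [List.length_map, List.length_range] at hi
  simp [List.getD_eq_getElem?_getD, List.getElem?_range hi]

theorem exists_isCSSubseq_of_typeOf {w : List (Fin k)} {ws : List (List (Option (Fin k)))}
    {v : List (Fin k ⊕ L)} (hv : v.length ≤ ws.length) (d : Fin k ⊕ L) :
    ∃ z zs, zs.length = (typeOf k v).length ∧ IsCSSubseq k w ws z zs ∧
      applyG k w ws v = applyG k z zs ((typeOf k v).map Sum.inr) := by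
  obtain ⟨nf, hN, hsm, hhead, hblocks⟩ := exists_isTypeBlocks_typeOf v d
  beta_reduce at hhead hblocks
  set a : ℕ → Option (Fin k) := fun j => (v.getD j d).getLeft?
  have hhead' (j : ℕ) (hj : j < nf 0) : ∃ x, a j = some x ∧ v.getD j d = Sum.inl x := by
    obtain ⟨x, hx⟩ := Sum.isLeft_iff.1 (hhead j hj)
    exact ⟨x, by simp only [a, hx, Sum.getLeft?_inl], hx⟩
  have ha (j : ℕ) (hj : j < nf 0) : a j ≠ none := by
    obtain ⟨x, hx, -⟩ := hhead' j hj
    simp [hx]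
  obtain ⟨z, zs, hzslen, hz, hzs⟩ := exists_subseq_words w ws nf (typeOf k v).length ha
  have hblock (i : ℕ) (hi : i < zs.length) (j : ℕ) (hj₁ : nf i ≤ j)
      (hj₂ : j < nf (i + 1)) :
      v.getD j d = (a j).elim (((typeOf k v).map Sum.inr).getD i d) Sum.inl := by
    rw [hzslen] at hi
    rw [List.getD_eq_getElem ((typeOf k v).map Sum.inr) d (by simpa using hi), List.getElem_map]
    rcases hvj : v.getD j d with x | t
    · simp only [a, hvj, Sum.getLeft?_inl, Option.elim_some]
    · simp only [a, hvj, Sum.getLeft?_inr, Option.elim_none, (hblocks i hi).2 j hj₁ hj₂ t hvj]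
  rw [← hzslen] at hsm hN
  refine ⟨z, zs, hzslen, ⟨a, nf, hsm, hN ▸ hv, fun i hi => ?_, ha, hz, hzs⟩, ?_⟩
  · simp only [a, (hblocks i (hzslen ▸ hi)).1, Sum.getLeft?_inr]
  have happ := applyG_eq_applyG_range_map hsm.monotoneOn (hN ▸ hv) hz hzs
    (u := (typeOf k v).map Sum.inr) (by simp [hzslen]) d (c := (v.getD · d))
    (fun j hj => by obtain ⟨x, hx, hvx⟩ := hhead' j hj; rw [hvx, hx]; rfl) hblock
  rw [hN, List.map_getD_range] at happ
  exact happ.symm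

theorem exists_typeOf_eq_of_isCSSubseq {w z : List (Fin k)} {ws zs : List (List (Option (Fin k)))}
    {τ : List L} (hτ : τ.IsChain (· ≠ ·)) (hzs : zs.length = τ.length)
    (h : IsCSSubseq k w ws z zs) (d : Fin k ⊕ L) :
    ∃ v, v.length ≤ ws.length ∧ typeOf k v = τ ∧
      applyG k z zs (τ.map Sum.inr) = applyG k w ws v := by
  obtain ⟨a, nf, hsm, hN, hstart, hhead, hz, hzs'⟩ := h
  have hsm' : StrictMonoOn nf (Set.Iic τ.length) := hzs ▸ hsm
  set idx : ℕ → ℕ := fun j => Nat.findGreatest (nf · ≤ j) τ.length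
  have hidx (i : ℕ) (hi : i < τ.length) (j : ℕ) (hj₁ : nf i ≤ j) (hj₂ : j < nf (i + 1)) :
      idx j = i := by
    refine Nat.findGreatest_eq_iff.2 ⟨hi.le, fun _ => hj₁, fun n hin hn hnj => ?_⟩
    have := hsm'.monotoneOn (Set.mem_Iic.2 (show i + 1 ≤ τ.length by omega)) (Set.mem_Iic.2 hn)
      (show i + 1 ≤ n by omega)
    omega
  set c : ℕ → Fin k ⊕ L := fun j => (a j).elim ((τ.map Sum.inr).getD (idx j) d) Sum.inl
  have hblock (i : ℕ) (hi : i < τ.length) (j : ℕ) (hj₁ : nf i ≤ j)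
      (hj₂ : j < nf (i + 1)) :
      c j = (a j).elim ((τ.map Sum.inr).getD i d) Sum.inl := by
    simp only [c, hidx i hi j hj₁ hj₂]
  have hτblocks : IsTypeBlocks c τ nf := by
    refine ⟨hsm', fun j hj => ?_, fun i hi => ?_⟩
    · obtain ⟨x, hx⟩ := Option.ne_none_iff_exists'.1 (hhead j hj)
      simp [c, hx]
    have hu : (τ.map Sum.inr).getD i d = Sum.inr τ[i] := by simp [List.getElem?_eq_getElem hi]
    have hlt : nf i < nf (i + 1) :=
      hsm' (Set.mem_Iic.2 hi.le) (Set.mem_Iic.2 hi) (Nat.lt_succ_self i)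
    refine ⟨?_, fun j hj₁ hj₂ t ht => ?_⟩
    · rw [hblock i hi (nf i) le_rfl hlt, hstart i (hzs ▸ hi), hu]
      rfl
    · rw [hblock i hi j hj₁ hj₂, hu] at ht
      rcases haj : a j with _ | x <;> simp_all
  refine ⟨(List.range (nf τ.length)).map c, by simpa [← hzs] using hN,
    typeOf_range_map_of_isTypeBlocks hτ hτblocks, ?_⟩
  rw [← hzs]
  exact applyG_eq_applyG_range_map hsm.monotoneOn hN hz hzs' (by simp [hzs]) d
    (fun j hj => by obtain ⟨x, hx⟩ := Option.ne_none_iff_exists'.1 (hhead j hj); simp [c, hx])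
    (fun i hi => hblock i (hzs ▸ hi))

end CarlsonSimpson

theorem stmt_6_general (k : ℕ) {L : Type*} [DecidableEq L]
    (w : List (Fin k)) (ws : List (List (Option (Fin k))))
    (hleft : ∀ vw ∈ ws, IsLeftVar k vw)
    (τ : List L) (hτ : τ ≠ []) (hchain : τ.Chain' (· ≠ ·)) :
    {u : List (Fin k ⊕ L) | ∃ v : List (Fin k ⊕ L),
        v.length ≤ ws.length ∧ u = applyG k w ws v ∧ typeOf k u = τ} =
      {u : List (Fin k ⊕ L) | ∃ (z : List (Fin k)) (zs : List (List (Option (Fin k)))),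
        zs.length = τ.length ∧ IsCSSubseq k w ws z zs ∧
        u = applyG k z zs (τ.map Sum.inr)} := by
  have hws (vw : List (Option (Fin k))) (h : vw ∈ ws) : none ∈ vw := by
    obtain ⟨t, rfl⟩ := hleft vw h
    exact List.mem_cons_self
  -- only a default for `getD`, never read
  set d : Fin k ⊕ L := Sum.inr (τ.head hτ)
  ext u
  constructor
  · rintro ⟨v, hv, rfl, htype⟩
    rw [typeOf_applyG hv hws] at htype
    subst htype
    exact exists_isCSSubseq_of_typeOf hv d
  · rintro ⟨z, zs, hlen, hsub, rfl⟩
    obtain ⟨v, hv, htype, happ⟩ := exists_typeOf_eq_of_isCSSubseq hchain hlen hsub d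
    exact ⟨v, hv, happ, by rw [happ, typeOf_applyG hv hws, htype]⟩

/-- For a finite alphabet `𝓛` disjoint from `[k]`, an `n`-dimensional
Carlson–Simpson sequence `𝐰 = (w, ws)` over `k` and a type `τ` of length `m ≤ n`,
the set `𝐰(k,𝓛,τ)` of elements of `𝐰(k,𝓛)` of type `τ` equals
`{𝐳(τ) : 𝐳 ∈ Subseq_m(𝐰)}`. -/
theorem stmt_6 (k : ℕ) (hk : 2 ≤ k) {L : Type*} [DecidableEq L] [Fintype L]
    (w : List (Fin k)) (ws : List (List (Option (Fin k))))
    (hleft : ∀ vw ∈ ws, IsLeftVar k vw)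
    (τ : List L) (hτ : τ ≠ []) (hchain : τ.Chain' (· ≠ ·)) (hlen : τ.length ≤ ws.length) :
    {u : List (Fin k ⊕ L) | ∃ v : List (Fin k ⊕ L),
        v.length ≤ ws.length ∧ u = applyG k w ws v ∧ typeOf k u = τ} =
      {u : List (Fin k ⊕ L) | ∃ (z : List (Fin k)) (zs : List (List (Option (Fin k)))),
        zs.length = τ.length ∧ IsCSSubseq k w ws z zs ∧
        u = applyG k z zs (τ.map Sum.inr)} :=
  stmt_6_general k w ws hleft τ hτ hchain
end

section
/- Let k, p ≥ 2. The word representation map R_p : Fl_p([k]^{<ℕ}) → W(k, 𝓛_p) on flat sets of cardinality p is injective. -/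
/-- The word representation `R_p(F)` of a flat set `F` of cardinality `p`:
order `F` lexicographically as `t₀ <lex … <lex t_{p−1}`; for each coordinate `i` form the
column `āᵢ = (a_{i,0},…,a_{i,p−1})`; output the letter `a ∈ [k]` (`Sum.inl`) if the column
is constant with value `a`, and the column itself (`Sum.inr`, a letter of `𝓛_p`) otherwise. -/
def Rp (k p : ℕ) (hk : 0 < k) (hp : 0 < p) (F : Finset (List (Fin k))) :
    List (Fin k ⊕ (Fin p → Fin k)) :=
  (List.range ((F.sort (· ≤ ·)).headD []).length).map fun i =>
    let row : Fin p → Fin k := fun j => ((F.sort (· ≤ ·)).getD (j : ℕ) []).getD i ⟨0, hk⟩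
    if ∀ j, row j = row ⟨0, hp⟩ then Sum.inl (row ⟨0, hp⟩) else Sum.inr row

/-- The type of a flat set `F` of cardinality `p`: the type of its word representation
`R_p(F)` (erase the letters of `[k]`, collapse runs of equal letters of `𝓛_p`). -/
def flatType (k p : ℕ) (hk : 0 < k) (hp : 0 < p) (F : Finset (List (Fin k))) :
    List (Fin p → Fin k) :=
  ((Rp k p hk hp F).filterMap Sum.getRight?).destutter (· ≠ ·)

/-!
`R_p(F)` lists the columns of the `p × n` matrix whose rows are the words of `F` in
lexicographic order, a constant column being abbreviated by its value. Expanding these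
abbreviations gives back the columns, hence the rows, hence `F`.
-/

lemma List.map_getD_range_length {α : Type*} (l : List α) (d : α) :
    (List.range l.length).map (l.getD · d) = l :=
  List.ext_getElem (by simp) fun i _ hi => by simp [List.getElem?_eq_getElem hi]

lemma List.length_headD_of_forall_length_eq {α : Type*} {L : List (List α)} (hL : L ≠ [])
    {n : ℕ} (hn : ∀ w ∈ L, w.length = n) : (L.headD []).length = n := by
  cases L with
  | nil => contradiction
  | cons w L => exact hn w List.mem_cons_self

def rowsOfColumns {α : Type*} {p : ℕ} (cols : List (Fin p → α)) : List (List α) :=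
  (List.finRange p).map fun j => cols.map (· j)

lemma rowsOfColumns_columns {α : Type*} {L : List (List α)} {n : ℕ}
    (hn : ∀ w ∈ L, w.length = n) (d : α) :
    rowsOfColumns ((List.range n).map fun i (j : Fin L.length) => (L.getD j []).getD i d) = L := by
  conv_rhs => rw [← List.map_getElem_finRange L]
  refine List.map_congr_left fun j _ => ?_
  simp only [List.map_map, Function.comp_def, List.getD_eq_getElem _ _ j.isLt]
  rw [← hn _ (List.getElem_mem j.isLt)]
  exact List.map_getD_range_length _ d

section WordRepresentation

variable {k p : ℕ}

/-- Reads a letter of `R_p(F)` back as a column; `a ∈ [k]` stands for `(a, …, a)`. -/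
def columnOf : Fin k ⊕ (Fin p → Fin k) → Fin p → Fin k :=
  Sum.elim (fun a _ => a) id

lemma columnOf_ite (row : Fin p → Fin k) (j₀ : Fin p) :
    columnOf (if ∀ j, row j = row j₀ then Sum.inl (row j₀) else Sum.inr row) = row := by
  split_ifs with h
  · funext j
    exact (h j).symm
  · rfl

lemma map_columnOf_Rp (hk : 0 < k) (hp : 0 < p) (F : Finset (List (Fin k))) :
    (Rp k p hk hp F).map columnOf =
      (List.range ((F.sort (· ≤ ·)).headD []).length).map
        fun i (j : Fin p) => ((F.sort (· ≤ ·)).getD j []).getD i ⟨0, hk⟩ := by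
  rw [Rp, List.map_map]
  exact List.map_congr_left fun i _ => columnOf_ite _ _

lemma rowsOfColumns_map_columnOf_Rp (hk : 0 < k) (hp : 0 < p)
    {F : Finset (List (Fin k))} (hcard : F.card = p) {n : ℕ} (hn : ∀ w ∈ F, w.length = n) :
    rowsOfColumns ((Rp k p hk hp F).map columnOf) = F.sort (· ≤ ·) := by
  have hlen : (F.sort (· ≤ ·)).length = p := by rw [Finset.length_sort, hcard]
  have hn' : ∀ w ∈ F.sort (· ≤ ·), w.length = n := fun w hw => hn w ((Finset.mem_sort _).1 hw)
  rw [map_columnOf_Rp, List.length_headD_of_forall_length_eq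
    (List.ne_nil_of_length_pos (hlen ▸ hp)) hn']
  subst hlen
  exact rowsOfColumns_columns hn' _

end WordRepresentation

/-- For `k, p ≥ 2`, the word representation map
`R_p : Fl_p([k]^{<ℕ}) → W(k, 𝓛_p)` on flat sets of cardinality `p` is injective. -/
theorem stmt_9 (k p : ℕ) (hk : 2 ≤ k) (hp : 2 ≤ p) :
    Set.InjOn (Rp k p (by omega) (by omega))
      {F : Finset (List (Fin k)) | F.card = p ∧ ∃ n, ∀ w ∈ F, w.length = n} := by
  refine Set.LeftInvOn.injOn (f₁' := fun w => (rowsOfColumns (w.map columnOf)).toFinset) ?_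
  rintro F ⟨hcard, n, hn⟩
  simp only [rowsOfColumns_map_columnOf_Rp _ _ hcard hn, Finset.sort_toFinset]
end

section
/- Let k ≥ 2, let W be a Carlson–Simpson tree of [k]^{<ℕ}, and let G ⊆ W with |G| ≥ 2. Then there exists a basic set B with dimension at most |G| and width at most |G| such that G ⊆ B ⊆ W. -/
/-- A flat set: at least two words, all of the same length. -/
def IsFlat (k : ℕ) (F : Finset (List (Fin k))) : Prop :=
  2 ≤ F.card ∧ ∃ n, ∀ w ∈ F, w.length = n

/-- The infimum (longest common initial segment) of `F` is the empty word. -/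
def InfEmpty (k : ℕ) (F : Finset (List (Fin k))) : Prop :=
  ∀ u : List (Fin k), (∀ w ∈ F, u <+: w) → u = []

/-- The basic set generated by `(s, F₀,…,F_{ℓ−1})`:
`B = {s} ∪ ⋃_{i<ℓ} (s⌢F₀⌢…⌢Fᵢ)`, where `s⌢F₀⌢…⌢Fᵢ` is the set of all concatenations
`s⌢u₀⌢…⌢uᵢ` with `uⱼ ∈ Fⱼ`. -/
def basicSet (k : ℕ) (s : List (Fin k)) (Fs : List (Finset (List (Fin k)))) :
    Set (List (Fin k)) :=
  {s} ∪ ⋃ i ∈ Set.Iio Fs.length,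
    (Fs.take (i + 1)).foldl
      (fun A F => {x | ∃ u ∈ A, ∃ v ∈ F, x = u ++ v}) {s}

/-!
Write `G` as the image under `csApply` of a set `A` of `|G|` choice words, let `p` be their
longest common prefix, and cut at `|p| = l₀ < l₁ < ⋯ < lₙ`, the lengths of the words of `A` longer
than `p`. The `i`-th flat consists of the blocks `w_{lᵢ}(a_{lᵢ})⌢⋯⌢w_{lᵢ₊₁−1}(a_{lᵢ₊₁−1})` of the
words `a ∈ A` of length `≥ lᵢ₊₁`. The variable words being left, such a block starts with `a_{lᵢ}`,
so the infimum is empty as soon as two of these letters differ. Otherwise we add one block with a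
different first letter; the width stays `≤ |G|`, since then some word of `A` is too short to
contribute: were all of them of length `≥ lᵢ₊₁`, then `lᵢ = |p|` and all would continue `p` by
the same letter.
-/

-- Reducible, so that it matches the step function in the definition of `basicSet`.
abbrev appendSet {α : Type*} (A : Set (List α)) (F : Finset (List α)) : Set (List α) :=
  {x | ∃ u ∈ A, ∃ v ∈ F, x = u ++ v}

lemma foldl_appendSet_iUnion {α : Type*} {ι : Sort*} (L : List (Finset (List α)))
    (I : ι → Set (List α)) :
    L.foldl appendSet (⋃ i, I i) = ⋃ i, L.foldl appendSet (I i) := by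
  induction L generalizing I with
  | nil => rfl
  | cons F L ih =>
    simp only [List.foldl_cons]
    rw [← ih]
    congr 1
    ext x
    simp only [Set.mem_ofPred_eq, Set.mem_iUnion]
    grind

section BasicSet

variable {k : ℕ}

lemma basicSet_nil (s : List (Fin k)) : basicSet k s [] = {s} := by
  simp [basicSet]

lemma basicSet_cons (s : List (Fin k)) (F : Finset (List (Fin k)))
    (Fs : List (Finset (List (Fin k)))) :
    basicSet k s (F :: Fs) = insert s (⋃ v ∈ F, basicSet k (s ++ v) Fs) := by
  have hstep : ∀ i, ((F :: Fs).take (i + 1)).foldl appendSet {s} =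
      ⋃ v ∈ F, (Fs.take i).foldl appendSet {s ++ v} := by
    intro i
    have : appendSet {s} F = ⋃ v ∈ F, {s ++ v} := by
      ext; simp [eq_comm]
    rw [List.take_succ_cons, List.foldl_cons, this, foldl_appendSet_iUnion]
    simp_rw [foldl_appendSet_iUnion]
  ext x
  simp only [basicSet, hstep, Set.mem_union, Set.mem_singleton_iff, Set.mem_iUnion, Set.mem_Iio,
    Set.mem_insert_iff, List.length_cons]
  refine or_congr_right ⟨?_, ?_⟩
  · rintro ⟨_ | i, hi, v, hv, hx⟩
    · exact ⟨v, hv, Or.inl (by simpa using hx)⟩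
    · exact ⟨v, hv, Or.inr ⟨i, by omega, hx⟩⟩
  · rintro ⟨v, hv, rfl | ⟨i, hi, hx⟩⟩
    · exact ⟨0, by omega, v, hv, by simp⟩
    · exact ⟨i + 1, by omega, v, hv, hx⟩

end BasicSet

section Levels

variable {k : ℕ}

lemma exists_of_mem_zipWith_cons {β : Type*} {T : ℕ → ℕ → β} {F : β} :
    ∀ {rs : List ℕ} {l : ℕ}, List.Pairwise (· < ·) (l :: rs) →
      F ∈ List.zipWith T (l :: rs) rs → ∃ l' r', F = T l' r' ∧ l' ∈ l :: rs ∧ r' ∈ rs ∧ l' < r'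
  | [], _, _, hF => by simp at hF
  | r :: rs, l, hrs, hF => by
    rw [List.pairwise_cons] at hrs
    rcases List.mem_cons.mp hF with rfl | hF
    · exact ⟨l, r, rfl, List.mem_cons_self, List.mem_cons_self, hrs.1 r List.mem_cons_self⟩
    · obtain ⟨l', r', rfl, hl', hr', hlr⟩ := exists_of_mem_zipWith_cons hrs.2 hF
      exact ⟨l', r', rfl, List.mem_cons_of_mem _ hl', List.mem_cons_of_mem _ hr', hlr⟩

variable {T : ℕ → ℕ → Finset (List (Fin k))}

lemma length_mem_of_mem_basicSet_zipWith (hT : ∀ l r, ∀ v ∈ T l r, v.length = r - l) :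
    ∀ {rs : List ℕ} {l : ℕ} {q x : List (Fin k)}, q.length = l →
      List.Pairwise (· < ·) (l :: rs) → x ∈ basicSet k q (List.zipWith T (l :: rs) rs) →
      x.length ∈ l :: rs
  | [], _, _, _, hq, _, hx => by
    rw [List.zipWith_nil_right, basicSet_nil, Set.mem_singleton_iff] at hx
    simp [hx, hq]
  | r :: rs, l, q, x, hq, hrs, hx => by
    rw [List.pairwise_cons] at hrs
    rw [List.zipWith_cons_cons, basicSet_cons] at hx
    obtain rfl | hx := hx
    · simp [hq]
    · obtain ⟨v, hv, hx⟩ := Set.mem_iUnion₂.mp hx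
      have hqv : (q ++ v).length = r := by
        rw [List.length_append, hT l r v hv, hq]; have := hrs.1 r List.mem_cons_self; omega
      exact List.mem_cons_of_mem _ (length_mem_of_mem_basicSet_zipWith hT hqv hrs.2 hx)

lemma mem_basicSet_zipWith_take {a : List (Fin k)}
    (ha : ∀ l r, r ≤ a.length → (a.take r).drop l ∈ T l r) :
    ∀ {rs : List ℕ} {l : ℕ}, List.Pairwise (· < ·) (l :: rs) → a.length ∈ l :: rs →
      a ∈ basicSet k (a.take l) (List.zipWith T (l :: rs) rs)
  | [], l, _, hl => by
    rw [List.mem_singleton] at hl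
    simp [basicSet_nil, ← hl]
  | r :: rs, l, hrs, hl => by
    rw [List.zipWith_cons_cons, basicSet_cons]
    obtain hal | hal := List.mem_cons.mp hl
    · exact Or.inl (by simp [← hal])
    have hlr : l < r := List.rel_of_pairwise_cons hrs List.mem_cons_self
    have hra : r ≤ a.length :=
      (List.mem_cons.mp hal).elim ge_of_eq
        fun h => (List.rel_of_pairwise_cons (List.pairwise_cons.mp hrs).2 h).le
    have htake : a.take l ++ (a.take r).drop l = a.take r := by
      conv_rhs => rw [← List.take_append_drop l (a.take r)]
      rw [List.take_take, min_eq_left hlr.le]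
    refine Or.inr (Set.mem_iUnion₂.mpr ⟨_, ha l r hra, ?_⟩)
    rw [htake]
    exact mem_basicSet_zipWith_take ha (List.pairwise_cons.mp hrs).2 hal

end Levels

lemma List.zipWith_append_right_eq_drop {α β γ : Type*} (f : α → β → γ) :
    ∀ (l : List α) (l₁ l₂ : List β),
      List.zipWith f l (l₁ ++ l₂) = List.zipWith f l l₁ ++ List.zipWith f (l.drop l₁.length) l₂
  | [], _, _ => by simp
  | _ :: _, [], _ => by simp
  | a :: l, b :: l₁, l₂ => by
    simp [List.zipWith_append_right_eq_drop f l l₁ l₂]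

section CarlsonSimpson

variable {k : ℕ} {ws : List (List (Option (Fin k)))}

/-- `w_l(a_l)⌢…⌢w_{l+n−1}(a_{l+n−1})` for a word of choices `seg = (a_l,…,a_{l+n−1})`. -/
def csBlock (ws : List (List (Option (Fin k)))) (l : ℕ) (seg : List (Fin k)) : List (Fin k) :=
  (List.zipWith (subst k) (ws.drop l) seg).flatten

lemma csApply_append (w : List (Fin k)) (q seg : List (Fin k)) :
    csApply k w ws (q ++ seg) = csApply k w ws q ++ csBlock ws q.length seg := by
  simp [csApply, csBlock, List.zipWith_append_right_eq_drop]

lemma length_flatten_zipWith_subst :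
    ∀ (vws : List (List (Option (Fin k)))) (seg : List (Fin k)),
      (List.zipWith (subst k) vws seg).flatten.length = ((vws.take seg.length).map List.length).sum
  | [], _ => by simp
  | _ :: _, [] => by simp
  | vw :: vws, a :: seg => by
    simp [subst, length_flatten_zipWith_subst vws seg]

lemma length_csBlock (l : ℕ) (seg : List (Fin k)) :
    (csBlock ws l seg).length = (((ws.drop l).take seg.length).map List.length).sum :=
  length_flatten_zipWith_subst _ _

lemma head?_csBlock (hleft : ∀ vw ∈ ws, IsLeftVar k vw) {l : ℕ} (hl : l < ws.length)
    (seg : List (Fin k)) : (csBlock ws l seg).head? = seg.head? := by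
  obtain ⟨t, ht⟩ := hleft ws[l] (List.getElem_mem hl)
  cases seg with
  | nil => simp [csBlock]
  | cons a seg => simp [csBlock, List.drop_eq_getElem_cons hl, ht, subst]

lemma image_csApply_basicSet_zipWith (w : List (Fin k)) {T : ℕ → ℕ → Finset (List (Fin k))}
    (hT : ∀ l r, ∀ v ∈ T l r, v.length = r - l) :
    ∀ {rs : List ℕ} {l : ℕ} {q : List (Fin k)}, q.length = l → List.Pairwise (· < ·) (l :: rs) →
      csApply k w ws '' basicSet k q (List.zipWith T (l :: rs) rs) =
        basicSet k (csApply k w ws q)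
          (List.zipWith (fun l r => (T l r).image (csBlock ws l)) (l :: rs) rs)
  | [], _, _, _, _ => by simp [basicSet_nil]
  | r :: rs, l, q, hq, hrs => by
    rw [List.pairwise_cons] at hrs
    simp only [List.zipWith_cons_cons, basicSet_cons, Set.image_insert_eq, Set.image_iUnion₂,
      Finset.set_biUnion_finset_image]
    refine congrArg _ (Set.iUnion₂_congr fun v hv => ?_)
    have hqv : (q ++ v).length = r := by
      rw [List.length_append, hT l r v hv, hq]; have := hrs.1 r List.mem_cons_self; omega
    rw [image_csApply_basicSet_zipWith w hT hqv hrs.2, csApply_append, hq]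

end CarlsonSimpson

section Flat

variable {k : ℕ}

lemma isFlat_of_one_lt_card_image_head? {F : Finset (List (Fin k))}
    (hF : 1 < (F.image List.head?).card) (hlen : ∃ n, ∀ w ∈ F, w.length = n) : IsFlat k F :=
  ⟨hF.trans_le Finset.card_image_le, hlen⟩

lemma infEmpty_of_one_lt_card_image_head? {F : Finset (List (Fin k))}
    (hF : 1 < (F.image List.head?).card) : InfEmpty k F := by
  intro u hu
  by_contra hne
  obtain ⟨c, u', rfl⟩ := List.exists_cons_of_ne_nil hne
  have hsub : F.image List.head? ⊆ {some c} := by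
    intro x hx
    obtain ⟨w, hw, rfl⟩ := Finset.mem_image.mp hx
    obtain ⟨t, rfl⟩ := hu w hw
    simp
  have := Finset.card_le_card hsub
  rw [Finset.card_singleton] at this
  omega

lemma isFlat_and_infEmpty_image_csBlock {ws : List (List (Option (Fin k)))}
    (hleft : ∀ vw ∈ ws, IsLeftVar k vw) {l : ℕ} (hl : l < ws.length)
    {T : Finset (List (Fin k))} {n : ℕ} (hT : ∀ x ∈ T, x.length = n)
    (hbr : 1 < (T.image List.head?).card) :
    IsFlat k (T.image (csBlock ws l)) ∧ InfEmpty k (T.image (csBlock ws l)) := by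
  have himg : (T.image (csBlock ws l)).image List.head? = T.image List.head? := by
    rw [Finset.image_image]
    exact Finset.image_congr fun seg _ => head?_csBlock hleft hl seg
  rw [← himg] at hbr
  refine ⟨isFlat_of_one_lt_card_image_head? hbr
    ⟨(((ws.drop l).take n).map List.length).sum, ?_⟩, infEmpty_of_one_lt_card_image_head? hbr⟩
  intro x hx
  obtain ⟨seg, hseg, rfl⟩ := Finset.mem_image.mp hx
  rw [length_csBlock, hT seg hseg]

end Flat

section Words

variable {α : Type*}

lemma prefix_append_singleton_of_head?_drop {p a : List α} {c : α} (hp : p <+: a)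
    (hc : (a.drop p.length).head? = some c) : p ++ [c] <+: a := by
  obtain ⟨t, rfl⟩ := hp
  rw [List.drop_left] at hc
  obtain ⟨t', rfl⟩ : ∃ t', t = c :: t' := by
    cases t with
    | nil => simp at hc
    | cons b t' => exact ⟨t', by simpa using hc⟩
  exact ⟨t', by simp⟩

lemma head?_drop_take {l r : ℕ} (hlr : l < r) (a : List α) :
    ((a.take r).drop l).head? = (a.drop l).head? := by
  rw [List.drop_take, List.head?_take, if_neg (by omega)]

lemma exists_length_gt_of_forall_prefix {A : Finset (List α)} {p : List α} (hA : 1 < A.card)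
    (hpA : ∀ a ∈ A, p <+: a) : ∃ a ∈ A, p.length < a.length := by
  by_contra! h
  have hp : ∀ a ∈ A, a = p := fun a ha =>
    ((hpA a ha).eq_of_length (le_antisymm (hpA a ha).length_le (h a ha))).symm
  have := Finset.card_le_one.mpr fun a ha b hb => (hp a ha).trans (hp b hb).symm
  omega

lemma exists_longest_common_prefix {A : Finset (List α)} (hA : A.Nonempty) :
    ∃ p, (∀ a ∈ A, p <+: a) ∧ ∀ u, (∀ a ∈ A, u <+: a) → u.length ≤ p.length := by
  classical
  obtain ⟨a₀, ha₀⟩ := hA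
  have hC : ∀ u, u ∈ a₀.inits.toFinset.filter (fun u => ∀ a ∈ A, u <+: a) ↔ ∀ a ∈ A, u <+: a :=
    fun u => by simpa using fun h => h a₀ ha₀
  obtain ⟨p, hp, hpmax⟩ :=
    Finset.exists_max_image _ List.length ⟨[], (hC []).mpr fun _ _ => List.nil_prefix⟩
  exact ⟨p, (hC p).mp hp, fun u hu => hpmax u ((hC u).mpr hu)⟩

def cutLengths (A : Finset (List α)) (n : ℕ) : List ℕ :=
  ((A.image List.length).filter (n < ·)).sort (· ≤ ·)

variable {A : Finset (List α)}

lemma mem_cutLengths {n r : ℕ} : r ∈ cutLengths A n ↔ r ∈ A.image List.length ∧ n < r := by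
  simp only [cutLengths, Finset.mem_sort, Finset.mem_filter]

lemma pairwise_cutLengths (n : ℕ) : List.Pairwise (· < ·) (n :: cutLengths A n) :=
  List.pairwise_cons.mpr ⟨fun _ hr => (mem_cutLengths.mp hr).2, (Finset.sortedLT_sort _).pairwise⟩

lemma length_cutLengths_le (n : ℕ) : (cutLengths A n).length ≤ A.card := by
  rw [cutLengths, Finset.length_sort]
  exact (Finset.card_filter_le _ _).trans Finset.card_image_le

lemma cutLengths_ne_nil {n : ℕ} (h : ∃ a ∈ A, n < a.length) : cutLengths A n ≠ [] := by
  obtain ⟨a, ha, hn⟩ := h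
  exact List.ne_nil_of_mem (mem_cutLengths.mpr ⟨Finset.mem_image_of_mem _ ha, hn⟩)

lemma length_mem_cons_cutLengths {p a : List α} (hp : p <+: a) (ha : a ∈ A) :
    a.length ∈ p.length :: cutLengths A p.length := by
  rcases hp.length_le.eq_or_lt with h | h
  · exact h ▸ List.mem_cons_self
  · exact List.mem_cons_of_mem _ (mem_cutLengths.mpr ⟨Finset.mem_image_of_mem _ ha, h⟩)

lemma le_of_mem_cons_cutLengths {p : List α} {m : ℕ} (hA : A.Nonempty) (hpA : ∀ a ∈ A, p <+: a)
    (hAm : ∀ a ∈ A, a.length ≤ m) : ∀ n ∈ p.length :: cutLengths A p.length, n ≤ m := by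
  intro n hn
  rcases List.mem_cons.mp hn with rfl | hn
  · obtain ⟨a, ha⟩ := hA
    exact (hpA a ha).length_le.trans (hAm a ha)
  · obtain ⟨a, ha, rfl⟩ := Finset.mem_image.mp (mem_cutLengths.mp hn).1
    exact hAm a ha

variable [DecidableEq α]

def segments (A : Finset (List α)) (l r : ℕ) : Finset (List α) :=
  (A.filter fun a => r ≤ a.length).image fun a => (a.take r).drop l

lemma take_drop_mem_segments {a : List α} (ha : a ∈ A) {l r : ℕ} (hr : r ≤ a.length) :
    (a.take r).drop l ∈ segments A l r :=
  Finset.mem_image_of_mem _ (Finset.mem_filter.mpr ⟨ha, hr⟩)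

lemma length_of_mem_segments {l r : ℕ} {x : List α} (hx : x ∈ segments A l r) :
    x.length = r - l := by
  obtain ⟨a, ha, rfl⟩ := Finset.mem_image.mp hx
  simp [(Finset.mem_filter.mp ha).2]

lemma card_segments_le (l r : ℕ) : (segments A l r).card ≤ A.card :=
  Finset.card_image_le.trans (Finset.card_filter_le _ _)

lemma one_lt_card_image_head?_segments {p : List α} (hpA : ∀ a ∈ A, p <+: a)
    (hpmax : ∀ u, (∀ a ∈ A, u <+: a) → u.length ≤ p.length) {l r : ℕ} (hlr : l < r)
    (hr : r ∈ A.image List.length) (hl : l = p.length ∨ l ∈ A.image List.length)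
    (hcard : (segments A l r).card = A.card) : 1 < ((segments A l r).image List.head?).card := by
  have hlong : ∀ a ∈ A, r ≤ a.length := Finset.filter_card_eq
    (le_antisymm (Finset.card_filter_le _ _) (hcard ▸ Finset.card_image_le))
  have hlp : l = p.length := hl.resolve_right fun h => by
    obtain ⟨a, ha, rfl⟩ := Finset.mem_image.mp h
    exact absurd (hlong a ha) (by omega)
  obtain ⟨a₀, ha₀, -⟩ := Finset.mem_image.mp hr
  obtain ⟨c, hc⟩ : ∃ c, (a₀.drop l).head? = some c :=
    Option.ne_none_iff_exists'.mp (by simpa using (hlong a₀ ha₀).trans_lt' hlr)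
  by_contra! hle
  have hhead : ∀ a ∈ A, (a.drop l).head? = some c := by
    intro a ha
    have := Finset.card_le_one.mp hle
      _ (Finset.mem_image_of_mem _ (take_drop_mem_segments ha (hlong a ha)))
      _ (Finset.mem_image_of_mem _ (take_drop_mem_segments ha₀ (hlong a₀ ha₀)))
    rwa [head?_drop_take hlr, head?_drop_take hlr, hc] at this
  have := hpmax (p ++ [c]) fun a ha =>
    prefix_append_singleton_of_head?_drop (hpA a ha) (hlp ▸ hhead a ha)
  simp at this

end Words

section Extension

variable {k : ℕ}

lemma exists_superset_one_lt_card_image_head? (hk : 2 ≤ k) {T : Finset (List (Fin k))}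
    {n N : ℕ} (hn : 0 < n) (hT : T.Nonempty) (hlen : ∀ x ∈ T, x.length = n) (hcard : T.card ≤ N)
    (hfull : T.card = N → 1 < (T.image List.head?).card) :
    ∃ T', T ⊆ T' ∧ (∀ x ∈ T', x.length = n) ∧ 1 < (T'.image List.head?).card ∧ T'.card ≤ N := by
  by_cases hbr : 1 < (T.image List.head?).card
  · exact ⟨T, subset_rfl, hlen, hbr, hcard⟩
  obtain ⟨x, hx⟩ := hT
  obtain ⟨c, t, rfl⟩ := List.exists_cons_of_length_pos (hlen _ hx ▸ hn)
  have : Nontrivial (Fin k) := Fin.nontrivial_iff_two_le.mpr hk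
  obtain ⟨c', hc'⟩ := exists_ne c
  refine ⟨insert (c' :: t) T, Finset.subset_insert _ _, ?_, ?_, ?_⟩
  · intro y hy
    rcases Finset.mem_insert.mp hy with rfl | hy
    · simpa using hlen _ hx
    · exact hlen y hy
  · exact Finset.one_lt_card.mpr ⟨some c', Finset.mem_image_of_mem _ (Finset.mem_insert_self _ _),
      some c, Finset.mem_image_of_mem _ (Finset.mem_insert_of_mem hx), by simpa using hc'⟩
  · have := Finset.card_insert_le (c' :: t) T
    have := mt hfull hbr
    omega

lemma exists_extension_segments (hk : 2 ≤ k) {A : Finset (List (Fin k))} {p : List (Fin k)}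
    (hpA : ∀ a ∈ A, p <+: a) (hpmax : ∀ u, (∀ a ∈ A, u <+: a) → u.length ≤ p.length) :
    ∃ T : ℕ → ℕ → Finset (List (Fin k)), ∀ l r,
      segments A l r ⊆ T l r ∧ (∀ x ∈ T l r, x.length = r - l) ∧
      (l ∈ p.length :: cutLengths A p.length → r ∈ cutLengths A p.length → l < r →
        1 < ((T l r).image List.head?).card ∧ (T l r).card ≤ A.card) := by
  have key : ∀ l r, ∃ T', segments A l r ⊆ T' ∧ (∀ x ∈ T', x.length = r - l) ∧
      (l ∈ p.length :: cutLengths A p.length → r ∈ cutLengths A p.length → l < r →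
        1 < (T'.image List.head?).card ∧ T'.card ≤ A.card) := by
    intro l r
    by_cases h : l ∈ p.length :: cutLengths A p.length ∧ r ∈ cutLengths A p.length ∧ l < r
    · obtain ⟨hl, hr, hlr⟩ := h
      have hrA := (mem_cutLengths.mp hr).1
      have hlA : l = p.length ∨ l ∈ A.image List.length :=
        (List.mem_cons.mp hl).imp_right fun h => (mem_cutLengths.mp h).1
      obtain ⟨a, ha, rfl⟩ := Finset.mem_image.mp hrA
      obtain ⟨T', hsub, hlen, hbr, hcard⟩ := exists_superset_one_lt_card_image_head? hk
        (by omega) ⟨_, take_drop_mem_segments ha le_rfl⟩ (fun _ => length_of_mem_segments)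
        (card_segments_le l a.length) (one_lt_card_image_head?_segments hpA hpmax hlr hrA hlA)
      exact ⟨T', hsub, hlen, fun _ _ _ => ⟨hbr, hcard⟩⟩
    · exact ⟨segments A l r, subset_rfl, fun _ => length_of_mem_segments,
        fun hl hr hlr => absurd ⟨hl, hr, hlr⟩ h⟩
  choose T hT using key
  exact ⟨T, hT⟩

end Extension

lemma exists_finset_image_csApply_eq {k : ℕ} {w : List (Fin k)}
    {ws : List (List (Option (Fin k)))} {G : Finset (List (Fin k))}
    (hGW : ↑G ⊆ genTree k w ws) :
    ∃ A : Finset (List (Fin k)), (∀ a ∈ A, a.length ≤ ws.length) ∧ A.card = G.card ∧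
      A.image (csApply k w ws) = G := by
  have hsurj : Set.SurjOn (csApply k w ws) {as | as.length ≤ ws.length} G := fun g hg => by
    obtain ⟨as, has, rfl⟩ := hGW hg
    exact ⟨as, has, rfl⟩
  obtain ⟨A, hA, hinj, rfl⟩ := Finset.exists_subset_injOn_image_eq_of_surjOn _ _ hsurj
  exact ⟨A, hA, (Finset.card_image_of_injOn hinj).symm, rfl⟩

theorem stmt_12_general (k : ℕ) (hk : 2 ≤ k)
    (w : List (Fin k)) (ws : List (List (Option (Fin k))))
    (hleft : ∀ vw ∈ ws, IsLeftVar k vw)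
    (G : Finset (List (Fin k))) (hG : 2 ≤ G.card) (hGW : ↑G ⊆ genTree k w ws) :
    ∃ (s : List (Fin k)) (Fs : List (Finset (List (Fin k)))),
      Fs ≠ [] ∧ (∀ F ∈ Fs, IsFlat k F ∧ InfEmpty k F) ∧
      Fs.length ≤ G.card ∧ (∀ F ∈ Fs, F.card ≤ G.card) ∧
      ↑G ⊆ basicSet k s Fs ∧ basicSet k s Fs ⊆ genTree k w ws := by
  obtain ⟨A, hAlen, hAcard, rfl⟩ := exists_finset_image_csApply_eq hGW
  rw [← hAcard] at hG ⊢
  have hA : A.Nonempty := Finset.card_pos.mp (by omega)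
  obtain ⟨p, hpA, hpmax⟩ := exists_longest_common_prefix hA
  obtain ⟨T, hT⟩ := exists_extension_segments hk hpA hpmax
  have hcuts := pairwise_cutLengths (A := A) p.length
  have hcuts_le := le_of_mem_cons_cutLengths hA hpA hAlen
  have himage := image_csApply_basicSet_zipWith (ws := ws) w (fun l r => (hT l r).2.1) rfl hcuts
  refine ⟨csApply k w ws p, List.zipWith (fun l r => (T l r).image (csBlock ws l))
    (p.length :: cutLengths A p.length) (cutLengths A p.length), ?_, ?_, ?_, ?_, ?_, ?_⟩
  · simpa [List.ne_nil_iff_length_pos] using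
      List.length_pos_iff.mpr (cutLengths_ne_nil (exists_length_gt_of_forall_prefix hG hpA))
  · intro F hF
    obtain ⟨l, r, rfl, hl, hr, hlr⟩ := exists_of_mem_zipWith_cons hcuts hF
    exact isFlat_and_infEmpty_image_csBlock hleft
      (hlr.trans_le (hcuts_le r (List.mem_cons_of_mem _ hr))) (hT l r).2.1
      ((hT l r).2.2 hl hr hlr).1
  · simpa using length_cutLengths_le p.length
  · intro F hF
    obtain ⟨l, r, rfl, hl, hr, hlr⟩ := exists_of_mem_zipWith_cons hcuts hF
    exact Finset.card_image_le.trans ((hT l r).2.2 hl hr hlr).2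
  · rw [Finset.coe_image, ← himage]
    refine Set.image_mono fun a ha => ?_
    have := mem_basicSet_zipWith_take (fun l r hr => (hT l r).1 (take_drop_mem_segments ha hr))
      hcuts (length_mem_cons_cutLengths (hpA a ha) ha)
    rwa [← List.prefix_iff_eq_take.mp (hpA a ha)] at this
  · rw [← himage]
    rintro _ ⟨x, hx, rfl⟩
    exact ⟨x, hcuts_le _
      (length_mem_of_mem_basicSet_zipWith (fun l r => (hT l r).2.1) rfl hcuts hx), rfl⟩

/-- If `W` is a Carlson–Simpson tree of `[k]^{<ℕ}` and `G ⊆ W` with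
`|G| ≥ 2`, then there is a basic set `B` of dimension at most `|G|` and width at most
`|G|` with `G ⊆ B ⊆ W`. -/
theorem stmt_12 (k : ℕ) (hk : 2 ≤ k)
    (w : List (Fin k)) (ws : List (List (Option (Fin k))))
    (hws : ws ≠ []) (hleft : ∀ vw ∈ ws, IsLeftVar k vw)
    (G : Finset (List (Fin k))) (hG : 2 ≤ G.card) (hGW : ↑G ⊆ genTree k w ws) :
    ∃ (s : List (Fin k)) (Fs : List (Finset (List (Fin k)))),
      Fs ≠ [] ∧ (∀ F ∈ Fs, IsFlat k F ∧ InfEmpty k F) ∧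
      Fs.length ≤ G.card ∧ (∀ F ∈ Fs, F.card ≤ G.card) ∧
      ↑G ⊆ basicSet k s Fs ∧ basicSet k s Fs ⊆ genTree k w ws :=
  stmt_12_general k hk w ws hleft G hG hGW
end

section
/- Let k ≥ 2, let n ≥ 3, and let F ⊆ [k]^{<ℕ} with |F| = n. Then F is a free set if and only if F admits an enumeration {w₁,…,wₙ} such that |w₁| < |w₂| < … < |w_{n−1}| ≤ |wₙ| and, for every i ∈ {1,…,n−2}, |wᵢ| < |∧{w_{i+1},…,wₙ}|. -/
/-!
Unwinding `Fr_{n+1} = {w} ∪ G` lists a free set as `w₀, w₁, …, w_{n-1}`, where `w₀, …, w_{n-3}`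
are the words added one at a time and `{w_{n-2}, w_{n-1}}` is the initial doubleton; the side
condition of each step is `|wᵢ| < |∧{w_{i+1}, …, w_{n-1}}|`. Since `∧G` is an initial segment of
every member of `G`, this condition already forces `|wᵢ| < |w_{i+1}|`, and ordering the doubleton
by length gives `|w_{n-2}| ≤ |w_{n-1}|`. Conversely, an enumeration of this kind rebuilds `F` from
the doubleton `{w_{n-2}, w_{n-1}}`, whose two words are distinct because `|F| = n`.
-/

/-- The families `Frₙ` of free sets of `[k]^{<ℕ}`: `Fr₁` consists of all singletons,
`Fr₂` of all doubletons, and `Fr_{n+1}` (for `n ≥ 2`) of all sets `{w} ∪ G` with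
`G ∈ Frₙ` and `|w| < |∧G|` (expressed as: `G` has a common initial segment longer
than `w`). A set is free if it belongs to some `Frₙ`. -/
inductive Fr (k : ℕ) : ℕ → Finset (List (Fin k)) → Prop
  | single (w : List (Fin k)) : Fr k 1 {w}
  | pair (w u : List (Fin k)) (h : w ≠ u) : Fr k 2 {w, u}
  | cons (n : ℕ) (hn : 2 ≤ n) (w : List (Fin k)) (G : Finset (List (Fin k)))
      (hG : Fr k n G)
      (h : ∃ u : List (Fin k), (∀ g ∈ G, u <+: g) ∧ w.length < u.length) :
      Fr k (n + 1) (insert w G)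

open Finset

variable {α : Type*}

def seqCons (a : α) (s : ℕ → α) : ℕ → α
  | 0 => a
  | i + 1 => s i

theorem image_range_succ_eq_insert [DecidableEq α] (s : ℕ → α) (n : ℕ) :
    (range (n + 1)).image s = insert (s 0) ((range n).image fun i => s (i + 1)) := by
  rw [range_add_one', image_insert, map_eq_image, image_image]
  rfl

theorem image_range_seqCons [DecidableEq α] (a : α) (s : ℕ → α) (n : ℕ) :
    (range (n + 1)).image (seqCons a s) = insert a ((range n).image s) :=
  image_range_succ_eq_insert _ n

/-- The condition `|wᵢ| < |∧{w_{i+1}, …, w_{n-1}}|` for all `i ≤ n - 3`. -/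
def IsFreeChain (n : ℕ) (ws : ℕ → List α) : Prop :=
  ∀ i, i + 3 ≤ n → ∃ u : List α, (∀ j, i < j → j < n → u <+: ws j) ∧ (ws i).length < u.length

namespace IsFreeChain

variable {n : ℕ} {ws : ℕ → List α}

theorem length_lt_succ (h : IsFreeChain n ws) {i : ℕ} (hi : i + 3 ≤ n) :
    (ws i).length < (ws (i + 1)).length := by
  obtain ⟨u, hu, hlt⟩ := h i hi
  exact hlt.trans_le (hu (i + 1) i.lt_succ_self (by omega)).length_le

theorem tail (h : IsFreeChain (n + 1) ws) : IsFreeChain n fun i => ws (i + 1) := fun i hi =>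
  let ⟨u, hu, hlt⟩ := h (i + 1) (by omega)
  ⟨u, fun j hij hjn => hu (j + 1) (by omega) (by omega), hlt⟩

theorem seqCons (h : IsFreeChain n ws) {w u : List α} (hu : ∀ j < n, u <+: ws j)
    (hw : w.length < u.length) : IsFreeChain (n + 1) (seqCons w ws)
  | 0, _ => ⟨u, fun | j + 1, _, hj => hu j (by omega), hw⟩
  | i + 1, hi =>
    let ⟨v, hv, hlt⟩ := h i (by omega)
    ⟨v, fun | j + 1, hij, hjn => hv j (by omega) (by omega), hlt⟩

end IsFreeChain

theorem Fr.card_eq {k m : ℕ} {F : Finset (List (Fin k))} (h : Fr k m F) : F.card = m := by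
  induction h with
  | single => simp
  | pair _ _ h => exact card_pair h
  | cons n _ w G _ h ih =>
    obtain ⟨u, hu, hlen⟩ := h
    have hwG : w ∉ G := fun hw => absurd (hu w hw).length_le (by omega)
    rw [card_insert_of_notMem hwG, ih]

theorem Fr.exists_enum {k m : ℕ} {F : Finset (List (Fin k))} (hF : Fr k m F) (hm : 2 ≤ m) :
    ∃ ws : ℕ → List (Fin k), F = (range m).image ws ∧
      (ws (m - 2)).length ≤ (ws (m - 1)).length ∧ IsFreeChain m ws := by
  induction hF with
  | single => omega
  | pair a b =>
    rcases le_total a.length b.length with hab | hba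
    · exact ⟨seqCons a fun _ => b, by simp [image_range_seqCons], hab, fun i hi => by omega⟩
    · exact ⟨seqCons b fun _ => a, by simp [image_range_seqCons, pair_comm], hba,
        fun i hi => by omega⟩
  | cons n hn w G _ hwG ih =>
    obtain ⟨ws, rfl, hlast, hchain⟩ := ih hn
    obtain ⟨u, hu, hwu⟩ := hwG
    refine ⟨seqCons w ws, (image_range_seqCons w ws n).symm, ?_,
      hchain.seqCons (fun j hj => hu _ (mem_image_of_mem _ (mem_range.2 hj))) hwu⟩
    obtain ⟨n, rfl⟩ : ∃ n', n = n' + 2 := ⟨n - 2, by omega⟩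
    exact hlast

theorem Fr.of_isFreeChain {k n : ℕ} (hn : 2 ≤ n) {ws : ℕ → List (Fin k)}
    (hne : ws (n - 2) ≠ ws (n - 1)) (h : IsFreeChain n ws) : Fr k n ((range n).image ws) := by
  induction n, hn using Nat.le_induction generalizing ws with
  | base => simpa [image_range_succ_eq_insert] using Fr.pair _ _ hne
  | succ n hn ih =>
    obtain ⟨u, hu, hlt⟩ := h 0 (by omega)
    rw [image_range_succ_eq_insert]
    refine Fr.cons n hn _ _ (ih ?_ h.tail) ⟨u, forall_mem_image.2 fun j hj => ?_, hlt⟩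
    · obtain ⟨n, rfl⟩ : ∃ n', n = n' + 2 := ⟨n - 2, by omega⟩
      exact hne
    · exact hu (j + 1) j.succ_pos (by simpa using hj)

theorem stmt_15_general (k n : ℕ) (hn : 3 ≤ n)
    (F : Finset (List (Fin k))) (hF : F.card = n) :
    (∃ m, Fr k m F) ↔
      ∃ ws : ℕ → List (Fin k),
        F = (Finset.range n).image ws ∧
        (∀ i, i + 3 ≤ n → (ws i).length < (ws (i + 1)).length) ∧
        (ws (n - 2)).length ≤ (ws (n - 1)).length ∧
        (∀ i, i + 3 ≤ n → ∃ u : List (Fin k),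
          (∀ j, i < j → j < n → u <+: ws j) ∧ (ws i).length < u.length) := by
  constructor
  · rintro ⟨m, hFr⟩
    obtain rfl : m = n := hFr.card_eq.symm.trans hF
    obtain ⟨ws, rfl, hlast, hchain⟩ := hFr.exists_enum (by omega)
    exact ⟨ws, rfl, fun i hi => hchain.length_lt_succ hi, hlast, hchain⟩
  · rintro ⟨ws, rfl, -, -, hchain⟩
    have hinj : Set.InjOn ws (range n) := card_image_iff.mp (by rw [hF, card_range])
    refine ⟨n, Fr.of_isFreeChain (by omega) (fun heq => ?_) hchain⟩
    have := hinj (by simp; omega) (by simp; omega) heq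
    omega

/-- Let `k ≥ 2`, `n ≥ 3` and `F ⊆ [k]^{<ℕ}` with `|F| = n`. Then `F`
is free iff it admits an enumeration `w₀,…,w_{n−1}` with
`|w₀| < … < |w_{n−2}| ≤ |w_{n−1}|` and, for every `i ≤ n−3`,
`|wᵢ| < |∧{w_{i+1},…,w_{n−1}}|` (i.e. `{w_{i+1},…,w_{n−1}}` has a common initial
segment longer than `wᵢ`). -/
theorem stmt_15 (k n : ℕ) (hk : 2 ≤ k) (hn : 3 ≤ n)
    (F : Finset (List (Fin k))) (hF : F.card = n) :
    (∃ m, Fr k m F) ↔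
      ∃ ws : ℕ → List (Fin k),
        F = (Finset.range n).image ws ∧
        (∀ i, i + 3 ≤ n → (ws i).length < (ws (i + 1)).length) ∧
        (ws (n - 2)).length ≤ (ws (n - 1)).length ∧
        (∀ i, i + 3 ≤ n → ∃ u : List (Fin k),
          (∀ j, i < j → j < n → u <+: ws j) ∧ (ws i).length < u.length) :=
  stmt_15_general k n hn F hF
end

section
/- Let k, d ≥ 1 with k ≥ 2, let W be a d-dimensional Carlson–Simpson tree of [k]^{<ℕ}, and let n ≥ 1. Then W contains a free set of cardinality n if and only if n − 1 ≤ d. Moreover, for every F ⊆ [k]^{<d+1}, F is free if and only if I_W(F) is free, where I_W is the canonical isomorphism. -/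
/-! The canonical isomorphism `I_W` strictly preserves the order of lengths and preserves initial
segments, and since every `wᵢ` starts with its variable, the letter of `I_W(as)` at position
`|I_W(as.take t)|` is `as[t]`. Hence a common initial segment of `I_W(G)` longer than `I_W(x)`
forces the elements of `G` to agree on their first `|x| + 1` letters, so the relation
`|x| < |∧G|` that builds free sets is preserved and reflected by `I_W`, and so is freeness.
Counting in `[k]^{≤d}`: every step of the construction of a free set shortens the common initial
segment, so a free set `F` of words of length `≤ d` has `|F| + |∧F| ≤ d + 1`; the words
`a⁰, a¹, …, aⁿ⁻¹` form a free set of size `n`. -/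

theorem Finset.image_erase_of_injOn {α β : Type*} [DecidableEq α] [DecidableEq β] {f : α → β}
    {s : Finset α} {a : α} (hf : Set.InjOn f s) (ha : a ∈ s) :
    (s.erase a).image f = (s.image f).erase (f a) := by
  ext b
  simp only [Finset.mem_image, Finset.mem_erase]
  constructor
  · rintro ⟨c, ⟨hca, hc⟩, rfl⟩
    exact ⟨fun h => hca (hf hc ha h), c, hc, rfl⟩
  · rintro ⟨hb, c, hc, rfl⟩
    exact ⟨c, ⟨fun h => hb (h ▸ rfl), hc⟩, rfl⟩

theorem List.sum_take_lt_sum_take {L : List ℕ} (hL : ∀ x ∈ L, 0 < x) {i j : ℕ} (hij : i < j)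
    (hj : j ≤ L.length) : (L.take i).sum < (L.take j).sum :=
  have hi : i < L.length := by omega
  calc (L.take i).sum < (L.take i).sum + L[i] := Nat.lt_add_of_pos_right (hL _ (L.getElem_mem hi))
    _ = (L.take (i + 1)).sum := (L.sum_take_succ i hi).symm
    _ ≤ (L.take j).sum :=
        (List.take_prefix_take_left hij).sublist.sum_le_sum fun _ _ => Nat.zero_le _

variable {k : ℕ}

def ShorterThanMeet (x : List (Fin k)) (G : Finset (List (Fin k))) : Prop :=
  ∃ u : List (Fin k), (∀ g ∈ G, u <+: g) ∧ x.length < u.length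

theorem ShorterThanMeet.notMem {x : List (Fin k)} {G : Finset (List (Fin k))}
    (h : ShorterThanMeet x G) : x ∉ G := fun hx => by
  obtain ⟨u, hu, hxu⟩ := h
  have := (hu x hx).length_le
  omega

theorem Fr.nonempty {n : ℕ} {S : Finset (List (Fin k))} (h : Fr k n S) : S.Nonempty := by
  cases h <;> simp

theorem fr_image_iff {f : List (Fin k) → List (Fin k)} {F : Finset (List (Fin k))} {n : ℕ}
    (hf : Set.InjOn f F)
    (hmeet : ∀ G ⊆ F, G.Nonempty → ∀ x ∈ F,
      ShorterThanMeet (f x) (G.image f) ↔ ShorterThanMeet x G) :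
    Fr k n (F.image f) ↔ Fr k n F := by
  constructor
  · intro h
    generalize hH : F.image f = H at h
    induction h generalizing F with
    | single y =>
      have hcard : F.card = 1 := by
        rw [← Finset.card_image_of_injOn hf, hH, Finset.card_singleton]
      obtain ⟨x, rfl⟩ := Finset.card_eq_one.1 hcard
      exact Fr.single x
    | pair y z hyz =>
      have hcard : F.card = 2 := by
        rw [← Finset.card_image_of_injOn hf, hH, Finset.card_pair hyz]
      obtain ⟨x, x', hxx', rfl⟩ := Finset.card_eq_two.1 hcard
      exact Fr.pair x x' hxx'
    | cons n hn y G _ hy ih =>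
      obtain ⟨x, hxF, rfl⟩ := Finset.mem_image.1 (hH ▸ Finset.mem_insert_self _ G)
      have hG : (F.erase x).image f = G := by
        rw [Finset.image_erase_of_injOn hf hxF, hH,
          Finset.erase_insert (ShorterThanMeet.notMem hy)]
      have hfree := ih (hf.mono (Finset.erase_subset x F))
        (fun G' hG' hne x' hx' =>
          hmeet G' (hG'.trans (Finset.erase_subset x F)) hne x' (Finset.mem_of_mem_erase hx')) hG
      have hx : ShorterThanMeet x (F.erase x) :=
        (hmeet _ (Finset.erase_subset x F) hfree.nonempty x hxF).1 (hG ▸ hy)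
      simpa [Finset.insert_erase hxF] using Fr.cons n hn x _ hfree hx
  · intro h
    induction h with
    | single x => simpa using Fr.single (f x)
    | pair x y hxy =>
      rw [Finset.image_insert, Finset.image_singleton]
      exact Fr.pair _ _ fun h => hxy (hf (by simp) (by simp) h)
    | cons n hn x G hG hx ih =>
      have hGF : G ⊆ insert x G := Finset.subset_insert x G
      rw [Finset.image_insert]
      have hfree := ih (hf.mono hGF) fun G' hG' hne x' hx' =>
        hmeet G' (hG'.trans hGF) hne x' (hGF hx')
      exact Fr.cons n hn (f x) _ hfree
        ((hmeet G hGF hG.nonempty x (Finset.mem_insert_self x G)).2 hx)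

theorem Fr.add_length_le {n d : ℕ} {F : Finset (List (Fin k))} {c : List (Fin k)}
    (h : Fr k n F) (hF : ∀ g ∈ F, g.length ≤ d) (hc : ∀ g ∈ F, c <+: g) :
    n + c.length ≤ d + 1 := by
  induction h generalizing c with
  | single x =>
    have := (hc x (by simp)).length_le
    have := hF x (by simp)
    omega
  | pair x y hxy =>
    by_contra! hlong
    have hcx := (hc x (by simp)).eq_of_length
      (le_antisymm (hc x (by simp)).length_le (by have := hF x (by simp); omega))
    have hcy := (hc y (by simp)).eq_of_length
      (le_antisymm (hc y (by simp)).length_le (by have := hF y (by simp); omega))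
    exact hxy (hcx.symm.trans hcy)
  | cons n hn x G _ hx ih =>
    obtain ⟨u, hu, hxu⟩ := hx
    have := ih (fun g hg => hF g (Finset.mem_insert_of_mem hg)) hu
    have := (hc x (Finset.mem_insert_self x G)).length_le
    omega

theorem exists_fr_replicate_prefix (a : Fin k) (r m : ℕ) :
    ∃ F : Finset (List (Fin k)), Fr k (r + 2) F ∧
      ∀ g ∈ F, List.replicate m a <+: g ∧ g.length ≤ m + r + 1 := by
  have hstep : ∀ m, List.replicate m a <+: List.replicate (m + 1) a := fun m =>
    List.replicate_succ' ▸ List.prefix_append _ _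
  induction r generalizing m with
  | zero =>
    refine ⟨{List.replicate m a, List.replicate (m + 1) a}, Fr.pair _ _ ?_, ?_⟩
    · exact fun h => by simpa using congrArg List.length h
    · simp [hstep]
  | succ r ih =>
    obtain ⟨F, hF, hpre⟩ := ih (m + 1)
    refine ⟨insert (List.replicate m a) F, Fr.cons (r + 2) (by omega) _ F hF
      ⟨List.replicate (m + 1) a, fun g hg => (hpre g hg).1, by simp⟩, ?_⟩
    simp only [Finset.mem_insert, forall_eq_or_imp, List.length_replicate]
    refine ⟨⟨List.prefix_rfl, by omega⟩, fun g hg => ⟨(hstep m).trans (hpre g hg).1, ?_⟩⟩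
    have := (hpre g hg).2
    omega

theorem exists_fr_of_le (a : Fin k) {n d : ℕ} (hn : 1 ≤ n) (hnd : n ≤ d + 1) :
    ∃ F : Finset (List (Fin k)), (∀ g ∈ F, g.length ≤ d) ∧ Fr k n F := by
  obtain rfl | hn2 : n = 1 ∨ 2 ≤ n := by omega
  · exact ⟨{[]}, by simp, Fr.single []⟩
  · obtain ⟨F, hF, hlen⟩ := exists_fr_replicate_prefix a (n - 2) 0
    exact ⟨F, fun g hg => by have := (hlen g hg).2; omega, Nat.sub_add_cancel hn2 ▸ hF⟩

theorem IsLeftVar.length_pos {vw : List (Option (Fin k))} (h : IsLeftVar k vw) :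
    0 < vw.length := by
  obtain ⟨t, rfl⟩ := h
  simp

section CarlsonSimpson

variable {w : List (Fin k)} {ws : List (List (Option (Fin k)))}

theorem csApply_nil : csApply k w ws [] = w := by
  simp [csApply]

theorem csApply_cons (v : List (Option (Fin k))) (a : Fin k) (as : List (Fin k)) :
    csApply k w (v :: ws) (a :: as) = csApply k (w ++ subst k v a) ws as := by
  simp [csApply]

theorem length_csApply (as : List (Fin k)) :
    (csApply k w ws as).length = w.length + ((ws.take as.length).map List.length).sum := by
  induction as generalizing w ws with
  | nil => simp [csApply]
  | cons a as ih =>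
    cases ws with
    | nil => simp [csApply]
    | cons v ws => simp [csApply_cons, ih, subst, Nat.add_assoc]

theorem length_csApply_le_of_length_le {as bs : List (Fin k)} (h : as.length ≤ bs.length) :
    (csApply k w ws as).length ≤ (csApply k w ws bs).length := by
  simp only [length_csApply, Nat.add_le_add_iff_left]
  exact ((List.take_prefix_take_left h).map _).sublist.sum_le_sum fun _ _ => Nat.zero_le _

theorem length_csApply_lt_of_length_lt (hl : ∀ v ∈ ws, IsLeftVar k v) {as bs : List (Fin k)}
    (h : as.length < bs.length) (hb : bs.length ≤ ws.length) :
    (csApply k w ws as).length < (csApply k w ws bs).length := by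
  simp only [length_csApply, List.map_take, Nat.add_lt_add_iff_left]
  refine List.sum_take_lt_sum_take ?_ h (by simpa using hb)
  simp only [List.mem_map]
  rintro _ ⟨v, hv, rfl⟩
  exact (hl v hv).length_pos

theorem csApply_prefix_csApply {as bs : List (Fin k)} (h : as <+: bs)
    (ha : as.length ≤ ws.length) : csApply k w ws as <+: csApply k w ws bs := by
  induction as generalizing w ws bs with
  | nil => exact csApply_nil ▸ List.prefix_append _ _
  | cons a as ih =>
    obtain ⟨cs, rfl⟩ := h
    cases ws with
    | nil => simp at ha
    | cons v ws =>
      rw [List.cons_append, csApply_cons, csApply_cons]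
      exact ih (List.prefix_append _ _) (by simpa using ha)

theorem csApply_take_append_prefix (hl : ∀ v ∈ ws, IsLeftVar k v) {bs : List (Fin k)} {t : ℕ}
    (ht : t < bs.length) (hb : bs.length ≤ ws.length) :
    csApply k w ws (bs.take t) ++ [bs[t]] <+: csApply k w ws bs := by
  induction t generalizing w ws bs with
  | zero =>
    obtain ⟨b, bs, rfl⟩ := List.exists_cons_of_length_pos ht
    obtain ⟨v, ws, rfl⟩ := List.exists_cons_of_length_pos (by omega : 0 < ws.length)
    obtain ⟨tv, rfl⟩ := hl _ List.mem_cons_self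
    rw [csApply_cons]
    refine List.IsPrefix.trans ?_ (List.prefix_append _ _)
    simp [csApply_nil, subst]
  | succ t ih =>
    obtain ⟨b, bs, rfl⟩ := List.exists_cons_of_length_pos (by omega : 0 < bs.length)
    obtain ⟨v, ws, rfl⟩ := List.exists_cons_of_length_pos (by omega : 0 < ws.length)
    rw [List.take_succ_cons, csApply_cons, csApply_cons]
    exact ih (fun v hv => hl v (List.mem_cons_of_mem _ hv)) (by simpa using ht)
      (by simpa using hb)

theorem getElem_eq_of_prefix_csApply (hl : ∀ v ∈ ws, IsLeftVar k v) {as bs u : List (Fin k)}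
    {t : ℕ} (ha : as.length ≤ ws.length) (hb : bs.length ≤ ws.length) (hta : t < as.length)
    (htb : t < bs.length) (hua : u <+: csApply k w ws as) (hub : u <+: csApply k w ws bs)
    (hu : (csApply k w ws (as.take t)).length < u.length) : as[t] = bs[t] := by
  have hlen : (csApply k w ws (as.take t)).length = (csApply k w ws (bs.take t)).length := by
    rw [length_csApply, length_csApply, List.length_take, List.length_take, min_eq_left hta.le,
      min_eq_left htb.le]
  have hpa : csApply k w ws (as.take t) ++ [as[t]] <+: u :=
    List.prefix_of_prefix_length_le (csApply_take_append_prefix hl hta ha) hua (by simp; omega)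
  have hpb : csApply k w ws (bs.take t) ++ [bs[t]] <+: u :=
    List.prefix_of_prefix_length_le (csApply_take_append_prefix hl htb hb) hub (by simp; omega)
  have heq := (List.prefix_of_prefix_length_le hpa hpb (by simp; omega)).eq_of_length
    (by simp; omega)
  simpa using (List.append_inj heq hlen).2

theorem csApply_injOn (hl : ∀ v ∈ ws, IsLeftVar k v) :
    Set.InjOn (csApply k w ws) {as | as.length ≤ ws.length} := by
  intro as ha bs hb h
  have hlen : as.length = bs.length := by
    by_contra hne
    rcases Nat.lt_or_gt_of_ne hne with hlt | hlt
    · exact (length_csApply_lt_of_length_lt hl hlt hb).ne (congrArg List.length h)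
    · exact (length_csApply_lt_of_length_lt hl hlt ha).ne (congrArg List.length h).symm
  refine List.ext_getElem hlen fun t hta htb =>
    getElem_eq_of_prefix_csApply (w := w) hl ha hb hta htb List.prefix_rfl (h ▸ List.prefix_rfl)
      (length_csApply_lt_of_length_lt hl ?_ ha)
  simp only [List.length_take]
  omega

theorem shorterThanMeet_image_csApply_iff (hl : ∀ v ∈ ws, IsLeftVar k v)
    {G : Finset (List (Fin k))} {x : List (Fin k)} (hG : ∀ g ∈ G, g.length ≤ ws.length)
    (hGne : G.Nonempty) :
    ShorterThanMeet (csApply k w ws x) (G.image (csApply k w ws)) ↔ ShorterThanMeet x G := by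
  obtain ⟨g₀, hg₀⟩ := hGne
  constructor
  · rintro ⟨u, hu, hxu⟩
    have hu' : ∀ g ∈ G, u <+: csApply k w ws g := fun g hg => hu _ (Finset.mem_image_of_mem _ hg)
    have hlong : ∀ g ∈ G, x.length < g.length := fun g hg => by
      by_contra! hgx
      have := length_csApply_le_of_length_le (w := w) (ws := ws) hgx
      have := (hu' g hg).length_le
      omega
    refine ⟨g₀.take (x.length + 1), fun g hg => ?_, by simp [hlong g₀ hg₀]⟩
    suffices g.take (x.length + 1) = g₀.take (x.length + 1) from
      this ▸ List.take_prefix _ _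
    refine List.ext_getElem (by simp [hlong g hg, hlong g₀ hg₀]) fun t ht ht₀ => ?_
    simp only [List.getElem_take]
    simp only [List.length_take] at ht ht₀
    refine getElem_eq_of_prefix_csApply hl (hG g hg) (hG g₀ hg₀) (by omega) (by omega)
      (hu' g hg) (hu' g₀ hg₀) (lt_of_le_of_lt (length_csApply_le_of_length_le ?_) hxu)
    simp only [List.length_take]
    omega
  · rintro ⟨u, hu, hxu⟩
    have hu₀ : u.length ≤ ws.length := (hu g₀ hg₀).length_le.trans (hG g₀ hg₀)
    refine ⟨csApply k w ws u, ?_, length_csApply_lt_of_length_lt hl hxu hu₀⟩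
    simp only [Finset.mem_image]
    rintro _ ⟨g, hg, rfl⟩
    exact csApply_prefix_csApply (hu g hg) hu₀

end CarlsonSimpson

theorem genTree_eq_image (w : List (Fin k)) (ws : List (List (Option (Fin k)))) :
    genTree k w ws = csApply k w ws '' {as | as.length ≤ ws.length} := by
  ext u
  simp [genTree, eq_comm]

theorem fr_image_csApply_iff {w : List (Fin k)} {ws : List (List (Option (Fin k)))}
    (hl : ∀ v ∈ ws, IsLeftVar k v) {F : Finset (List (Fin k))}
    (hF : ∀ u ∈ F, u.length ≤ ws.length) {n : ℕ} :
    Fr k n (F.image (csApply k w ws)) ↔ Fr k n F :=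
  fr_image_iff ((csApply_injOn hl).mono hF) fun _ hGF hGne _ _ =>
    shorterThanMeet_image_csApply_iff hl (fun g hg => hF g (hGF hg)) hGne

theorem stmt_16_general (k d : ℕ) (hk : 2 ≤ k)
    (w : List (Fin k)) (ws : List (List (Option (Fin k))))
    (hlen : ws.length = d) (hleft : ∀ vw ∈ ws, IsLeftVar k vw) :
    (∀ n : ℕ, 1 ≤ n →
      ((∃ F : Finset (List (Fin k)), ↑F ⊆ genTree k w ws ∧ Fr k n F) ↔ n - 1 ≤ d)) ∧
    (∀ F : Finset (List (Fin k)), (∀ u ∈ F, u.length ≤ d) →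
      ((∃ n, Fr k n F) ↔ ∃ n, Fr k n (F.image (csApply k w ws)))) := by
  subst hlen
  refine ⟨fun n hn => ⟨?_, fun hnd => ?_⟩, fun F hF => ?_⟩
  · rintro ⟨H, hH, hfree⟩
    obtain ⟨F, hF, rfl⟩ := Finset.subset_set_image_iff.1 (genTree_eq_image w ws ▸ hH)
    have := ((fr_image_csApply_iff hleft hF).1 hfree).add_length_le hF (c := []) (by simp)
    simp only [List.length_nil] at this
    omega
  · obtain ⟨F, hF, hfree⟩ :=
      exists_fr_of_le (⟨0, by omega⟩ : Fin k) (d := ws.length) hn (by omega)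
    refine ⟨F.image (csApply k w ws), ?_, (fr_image_csApply_iff hleft hF).2 hfree⟩
    exact genTree_eq_image w ws ▸ Finset.subset_set_image_iff.2 ⟨F, hF, rfl⟩
  · simp only [fr_image_csApply_iff hleft hF]

/-- Let `W` be a `d`-dimensional Carlson–Simpson tree of `[k]^{<ℕ}`
(`k ≥ 2`, `d ≥ 1`). Then for every `n ≥ 1`, `W` contains a free set of cardinality `n`
iff `n − 1 ≤ d`; moreover, for every `F ⊆ [k]^{<d+1}`, `F` is free iff `I_W(F)` is free,
where `I_W` is the canonical isomorphism. -/
theorem stmt_16 (k d : ℕ) (hk : 2 ≤ k) (hd : 1 ≤ d)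
    (w : List (Fin k)) (ws : List (List (Option (Fin k))))
    (hlen : ws.length = d) (hleft : ∀ vw ∈ ws, IsLeftVar k vw) :
    (∀ n : ℕ, 1 ≤ n →
      ((∃ F : Finset (List (Fin k)), ↑F ⊆ genTree k w ws ∧ Fr k n F) ↔ n - 1 ≤ d)) ∧
    (∀ F : Finset (List (Fin k)), (∀ u ∈ F, u.length ≤ d) →
      ((∃ n, Fr k n F) ↔ ∃ n, Fr k n (F.image (csApply k w ws)))) :=
  stmt_16_general k d hk w ws hlen hleft
end
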